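/- arXiv:2604.04900 — 6 statements merged into one kernel-verified Lean document; each statement's English description precedes it below -/
import Mathlib

section
/- For n ≥ 1 and k ≥ 2, the maximum semisymmetric height attained by a k-dimensional balanced ballot path of length kn equals ⌊k/2⌋·⌈k/2⌉·n. That is, every such path has semisymmetric height at most ⌊k/2⌋·⌈k/2⌉·n, and some such path attains this value. -/
open scoped Classical

/-- Number of steps among the first `i` steps of `P` equal to basis vector `j`. -/
def cnt (k n : ℕ) (P : Fin (k*n) → Fin k) (j : Fin k) (i : ℕ) : ℕ :=
  (Finset.univ.filter (fun t : Fin (k*n) => (t : ℕ) < i ∧ P t = j)).card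

/-- `P` is a `k`-dimensional balanced ballot path of length `k*n`:
each basis vector appears exactly `n` times, and every partial sum is
weakly decreasing in coordinates. -/
def IsBBP (k n : ℕ) (P : Fin (k*n) → Fin k) : Prop :=
  (∀ j : Fin k, cnt k n P j (k*n) = n) ∧
  (∀ i ≤ k*n, ∀ j j' : Fin k, j ≤ j' → cnt k n P j' i ≤ cnt k n P j i)

/-- Semisymmetric height `g_k` of the `i`-th intermediate point of `P`. -/
def ptHt (k n : ℕ) (P : Fin (k*n) → Fin k) (i : ℕ) : ℤ :=
  ∑ j : Fin k, ((k : ℤ) - 1 - 2*(j : ℕ)) * (cnt k n P j i)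

/-- The semisymmetric height of path `P` is at most `u`. -/
def HeightLE (k n : ℕ) (P : Fin (k*n) → Fin k) (u : ℤ) : Prop :=
  ∀ i ≤ k*n, ptHt k n P i ≤ u

/-- The semisymmetric height of path `P` is exactly `u`. -/
def HeightEq (k n : ℕ) (P : Fin (k*n) → Fin k) (u : ℤ) : Prop :=
  HeightLE k n P u ∧ ∃ i ≤ k*n, ptHt k n P i = u

/- ### Auxiliary lemmas -/

lemma sumA (k m : ℕ) : ∑ t ∈ Finset.range m, ((k:ℤ) - 1 - 2*t) = m * (k - m) := by
  induction m with
  | zero => simp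
  | succ m ih => rw [Finset.sum_range_succ, ih]; push_cast; ring

lemma cnt_le_final (k n : ℕ) (P : Fin (k*n) → Fin k) (j : Fin k) (i : ℕ) :
    cnt k n P j i ≤ cnt k n P j (k*n) := by
  apply Finset.card_le_card
  intro t ht
  simp only [Finset.mem_filter, Finset.mem_univ, true_and] at *
  exact ⟨t.isLt, ht.2⟩

lemma card_fin_filter (N : ℕ) (q : ℕ → Prop) [DecidablePred q]
    [DecidablePred (fun t : Fin N => q t.val)] :
    (Finset.univ.filter (fun t : Fin N => q t.val)).card
      = ((Finset.range N).filter q).card := by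
  have h : ((Finset.univ : Finset (Fin N)).filter (fun t => q t.val)).map Fin.valEmbedding
      = (Finset.range N).filter q := by
    ext x
    simp only [Finset.mem_map, Finset.mem_filter, Finset.mem_univ, true_and,
      Finset.mem_range, Fin.valEmbedding_apply]
    constructor
    · rintro ⟨t, hq, rfl⟩; exact ⟨t.isLt, hq⟩
    · rintro ⟨hx, hq⟩; exact ⟨⟨x, hx⟩, hq, rfl⟩
  rw [← h, Finset.card_map]

lemma div_eq_iff' {n : ℕ} (hn : 0 < n) (x j : ℕ) :
    x / n = j ↔ j*n ≤ x ∧ x < (j+1)*n := by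
  constructor
  · intro h
    constructor
    · have := (Nat.le_div_iff_mul_le hn (x := j) (y := x)).mp (le_of_eq h.symm)
      exact this
    · exact (Nat.div_lt_iff_lt_mul hn).mp (by omega)
  · rintro ⟨h1, h2⟩
    exact Nat.div_eq_of_lt_le h1 h2

/-- The canonical staircase path: `n` copies of `e_0`, then `n` copies of `e_1`, etc. -/
def Wp (k n : ℕ) (t : Fin (k*n)) : Fin k :=
  ⟨t.val / n, by
    have h := t.isLt
    rcases Nat.eq_zero_or_pos n with h0 | h0
    · subst h0; simp at h
    · exact (Nat.div_lt_iff_lt_mul h0).mpr (by omega)⟩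

lemma cnt_Wp (k n : ℕ) (hn : 0 < n) (j : Fin k) (i : ℕ) (hi : i ≤ k*n) :
    cnt k n (Wp k n) j i = min i ((j.val+1)*n) - min i (j.val*n) := by
  have hfilter : (Finset.univ.filter (fun t : Fin (k*n) => (t : ℕ) < i ∧ Wp k n t = j))
      = Finset.univ.filter (fun t : Fin (k*n) => (t.val < i ∧ t.val / n = j.val)) := by
    apply Finset.filter_congr
    intro t _
    simp [Wp, Fin.ext_iff]
  rw [cnt, hfilter, card_fin_filter (k*n) (fun x => x < i ∧ x / n = j.val)]
  have hjk : (j.val + 1) * n ≤ k * n := Nat.mul_le_mul_right n j.isLt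
  have hset : ((Finset.range (k*n)).filter (fun x => x < i ∧ x / n = j.val))
      = Finset.Ico (j.val*n) (min i ((j.val+1)*n)) := by
    ext x
    simp only [Finset.mem_filter, Finset.mem_range, Finset.mem_Ico, lt_min_iff]
    rw [div_eq_iff' hn]
    omega
  rw [hset, Nat.card_Ico]
  omega

lemma isBBP_Wp (k n : ℕ) (hn : 0 < n) : IsBBP k n (Wp k n) := by
  constructor
  · intro j
    rw [cnt_Wp k n hn j (k*n) le_rfl]
    have hjk : (j.val + 1) * n ≤ k * n := Nat.mul_le_mul_right n j.isLt
    have : j.val * n ≤ (j.val + 1) * n := Nat.mul_le_mul_right n (by omega)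
    have h0 : j.val * n ≤ k * n := le_trans this hjk
    have hsucc : (j.val + 1) * n = j.val * n + n := by ring
    omega
  · intro i hi j j' hjj'
    rw [cnt_Wp k n hn j i hi, cnt_Wp k n hn j' i hi]
    have hjj : j.val ≤ j'.val := hjj'
    have h1 : j.val * n ≤ j'.val * n := Nat.mul_le_mul_right n hjj
    have h2 : (j.val + 1) * n = j.val * n + n := by ring
    have h3 : (j'.val + 1) * n = j'.val * n + n := by ring
    omega

theorem stmt3 (k n : ℕ) (hk : 2 ≤ k) (hn : 1 ≤ n) :
    (∀ P : Fin (k*n) → Fin k, IsBBP k n P →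
      HeightLE k n P (((k/2) * ((k+1)/2) * n : ℕ) : ℤ)) ∧
    ∃ P : Fin (k*n) → Fin k, IsBBP k n P ∧
      HeightEq k n P (((k/2) * ((k+1)/2) * n : ℕ) : ℤ) := by
  set m : ℕ := k / 2 with hm
  have hmk : m ≤ k := Nat.div_le_self k 2
  have h2m : 2 * m ≤ k := by omega
  have hk2m : k ≤ 2 * m + 1 := by omega
  have hkm : k - m = (k+1)/2 := by omega
  -- the target bound as an integer
  have htarget : (((k/2) * ((k+1)/2) * n : ℕ) : ℤ) = ((m:ℤ) * ((k:ℤ) - m)) * n := by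
    have h1 : (k/2) * ((k+1)/2) * n = m * (k - m) * n := by rw [← hm, ← hkm]
    rw [h1]; push_cast [Nat.cast_sub hmk]; ring
  -- the key sum identity
  have hsum_m : ∑ t ∈ Finset.range m, ((k:ℤ) - 1 - 2*t) = (m:ℤ) * ((k:ℤ) - m) := sumA k m
  -- Part 1: upper bound
  have upper : ∀ P : Fin (k*n) → Fin k, IsBBP k n P →
      HeightLE k n P (((k/2) * ((k+1)/2) * n : ℕ) : ℤ) := by
    intro P hP i hi
    rw [htarget]
    have hpt : ptHt k n P i ≤ ∑ j : Fin k,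
        (if (j:ℕ) < m then ((k:ℤ) - 1 - 2*(j:ℕ)) * n else 0) := by
      rw [ptHt]
      apply Finset.sum_le_sum
      intro j _
      have hc0 : (0:ℤ) ≤ (cnt k n P j i : ℤ) := Int.natCast_nonneg _
      have hcn : (cnt k n P j i : ℤ) ≤ n := by
        have := le_trans (cnt_le_final k n P j i) (le_of_eq (hP.1 j))
        exact_mod_cast this
      by_cases hj : (j:ℕ) < m
      · rw [if_pos hj]
        have ha : (0:ℤ) ≤ (k:ℤ) - 1 - 2*(j:ℕ) := by omega
        exact mul_le_mul_of_nonneg_left hcn ha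
      · rw [if_neg hj]
        have ha : ((k:ℤ) - 1 - 2*(j:ℕ)) ≤ 0 := by omega
        exact mul_nonpos_iff.mpr (Or.inr ⟨ha, hc0⟩)
    refine le_trans hpt ?_
    rw [Fin.sum_univ_eq_sum_range (fun t => if t < m then ((k:ℤ) - 1 - 2*t) * n else 0) k]
    rw [← Finset.sum_subset (Finset.range_subset_range.mpr hmk)
      (fun x _ hx => by rw [if_neg (by simpa using hx)])]
    rw [Finset.sum_congr rfl (fun x hx => if_pos (Finset.mem_range.mp hx)),
      ← Finset.sum_mul, hsum_m]
  refine ⟨upper, Wp k n, isBBP_Wp k n hn, upper _ (isBBP_Wp k n hn), m * n, ?_, ?_⟩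
  · exact Nat.mul_le_mul_right n hmk
  · -- value of the staircase path at time m*n
    have hcnt : ∀ j : Fin k, (cnt k n (Wp k n) j (m*n) : ℤ)
        = if (j:ℕ) < m then (n:ℤ) else 0 := by
      intro j
      rw [cnt_Wp k n hn j (m*n) (Nat.mul_le_mul_right n hmk)]
      by_cases hj : (j:ℕ) < m
      · rw [if_pos hj]
        have h1 : (j.val + 1) * n ≤ m * n := Nat.mul_le_mul_right n (by omega)
        have h2 : j.val * n + n = (j.val+1) * n := by ring
        have : min (m*n) ((j.val+1)*n) - min (m*n) (j.val*n) = n := by omega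
        rw [this]
      · rw [if_neg hj]
        have h1 : m * n ≤ j.val * n := Nat.mul_le_mul_right n (by omega)
        have h2 : m * n ≤ (j.val+1) * n := by
          have : j.val * n ≤ (j.val+1)*n := Nat.mul_le_mul_right n (by omega)
          omega
        have : min (m*n) ((j.val+1)*n) - min (m*n) (j.val*n) = 0 := by omega
        rw [this]; simp
    rw [ptHt, htarget]
    calc ∑ j : Fin k, ((k:ℤ) - 1 - 2*(j:ℕ)) * (cnt k n (Wp k n) j (m*n))
        = ∑ j : Fin k, (if (j:ℕ) < m then ((k:ℤ) - 1 - 2*(j:ℕ)) * n else 0) := by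
          apply Finset.sum_congr rfl
          intro j _
          rw [hcnt j]
          by_cases hj : (j:ℕ) < m
          · rw [if_pos hj, if_pos hj]
          · rw [if_neg hj, if_neg hj, mul_zero]
      _ = ((m:ℤ) * ((k:ℤ) - m)) * n := by
          rw [Fin.sum_univ_eq_sum_range (fun t => if t < m then ((k:ℤ) - 1 - 2*t) * n else 0) k]
          rw [← Finset.sum_subset (Finset.range_subset_range.mpr hmk)
            (fun x _ hx => by rw [if_neg (by simpa using hx)])]
          rw [Finset.sum_congr rfl (fun x hx => if_pos (Finset.mem_range.mp hx)),
            ← Finset.sum_mul, hsum_m]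
end

section
/- For every n ≥ 1, the sequence repeating (e_1, e_2, e_3) n times is the unique nonempty 3-dimensional balanced ballot path of length 3n whose semisymmetric height is at most 3 (equivalently, at most 2). -/
open scoped Classical

/-! If `x₁ ≥ x₂ ≥ x₃` and `2x₁ - 2x₃ ≤ 3`, then `x₁ - x₃ ≤ 1`, so each intermediate point of the
path is forced by its total `x₁ + x₂ + x₃ = i`: it is the `i`-th point of `e₁ e₂ e₃ e₁ e₂ e₃ ⋯`.
A path is determined by its sequence of points, and that periodic path has height at most 2. -/

section Counting

variable {k n : ℕ} (P : Fin (k*n) → Fin k)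

lemma cnt_zero (j : Fin k) : cnt k n P j 0 = 0 := by
  simp [cnt]

lemma cnt_succ (j : Fin k) {i : ℕ} (hi : i < k*n) :
    cnt k n P j (i+1) = cnt k n P j i + if P ⟨i, hi⟩ = j then 1 else 0 := by
  have hsplit : ∀ t : Fin (k*n), (if (t : ℕ) < i+1 ∧ P t = j then 1 else 0) =
      (if (t : ℕ) < i ∧ P t = j then 1 else 0) +
        if t = ⟨i, hi⟩ then (if P ⟨i, hi⟩ = j then 1 else 0) else 0 := by
    intro t
    by_cases ht : t = ⟨i, hi⟩
    · subst ht; simp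
    · have : (t : ℕ) ≠ i := fun h => ht (Fin.ext h)
      simp only [ht, if_false, add_zero]
      split_ifs <;> omega
  simp only [cnt, Finset.card_filter, hsplit, Finset.sum_add_distrib, Finset.sum_ite_eq',
    Finset.mem_univ, if_true]

lemma sum_cnt {i : ℕ} (hi : i ≤ k*n) : ∑ j, cnt k n P j i = i := by
  induction i with
  | zero => simp [cnt_zero]
  | succ i ih =>
    have hi' : i < k*n := by omega
    simp only [cnt_succ P _ hi', Finset.sum_add_distrib, ih hi'.le, Finset.sum_ite_eq,
      Finset.mem_univ, if_true]

theorem eq_of_cnt_eq {Q : Fin (k*n) → Fin k}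
    (h : ∀ i ≤ k*n, ∀ j, cnt k n P j i = cnt k n Q j i) : P = Q := by
  funext t
  have hstep := h (t+1) t.isLt (P t)
  rw [cnt_succ P _ t.isLt, cnt_succ Q _ t.isLt, h t t.isLt.le] at hstep
  simpa [eq_comm] using hstep

end Counting

lemma ptHt_three {n : ℕ} (P : Fin (3*n) → Fin 3) (i : ℕ) :
    ptHt 3 n P i = 2 * (cnt 3 n P 0 i : ℤ) - 2 * cnt 3 n P 2 i := by
  simp only [ptHt, Fin.sum_univ_three]
  norm_num
  ring

def roundRobin (n : ℕ) : Fin (3*n) → Fin 3 := fun t => ⟨(t : ℕ) % 3, Nat.mod_lt _ three_pos⟩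

lemma cnt_roundRobin {n i : ℕ} (hi : i ≤ 3*n) :
    cnt 3 n (roundRobin n) 0 i = (i+2)/3 ∧ cnt 3 n (roundRobin n) 1 i = (i+1)/3 ∧
      cnt 3 n (roundRobin n) 2 i = i/3 := by
  induction i with
  | zero => simp [cnt_zero]
  | succ i ih =>
    have hi' : i < 3*n := by omega
    obtain ⟨h0, h1, h2⟩ := ih hi'.le
    simp only [cnt_succ _ _ hi', h0, h1, h2, roundRobin, Fin.ext_iff]
    refine ⟨?_, ?_, ?_⟩ <;> split_ifs <;> simp_all <;> omega

lemma heightLE_roundRobin (n : ℕ) : HeightLE 3 n (roundRobin n) 2 := by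
  intro i hi
  obtain ⟨h0, -, h2⟩ := cnt_roundRobin hi
  rw [ptHt_three, h0, h2]
  omega

lemma cnt_eq_of_heightLE {n : ℕ} {P : Fin (3*n) → Fin 3} (hP : IsBBP 3 n P)
    (hle : HeightLE 3 n P 3) {i : ℕ} (hi : i ≤ 3*n) :
    cnt 3 n P 0 i = (i+2)/3 ∧ cnt 3 n P 1 i = (i+1)/3 ∧ cnt 3 n P 2 i = i/3 := by
  have hsum := sum_cnt P hi
  have h10 := hP.2 i hi 0 1 (by decide)
  have h21 := hP.2 i hi 1 2 (by decide)
  have hht := hle i hi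
  rw [Fin.sum_univ_three] at hsum
  rw [ptHt_three] at hht
  omega

theorem stmt6 (n : ℕ) (P : Fin (3*n) → Fin 3) (hP : IsBBP 3 n P) :
    HeightLE 3 n P 3 ↔ P = fun t => ⟨(t : ℕ) % 3, by omega⟩ := by
  change _ ↔ P = roundRobin n
  constructor
  · intro hle
    refine eq_of_cnt_eq P fun i hi j => ?_
    obtain ⟨p0, p1, p2⟩ := cnt_eq_of_heightLE hP hle hi
    obtain ⟨r0, r1, r2⟩ := cnt_roundRobin hi
    fin_cases j
    exacts [p0.trans r0.symm, p1.trans r1.symm, p2.trans r2.symm]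
  · rintro rfl i hi
    exact (heightLE_roundRobin n i hi).trans (by norm_num)
end

section
/- Let b = (b_0, b_1, ...) be a sequence of integers. For n ≥ 2, the 3-dimensional 4-bounded semisymmetric weighted Catalan numbers satisfy the linear recurrence A_n = (b_0 + 3b_2)·A_{n-1} + b_0·b_2·A_{n-2}, with initial conditions A_0 = 1 and A_1 = b_0, where A_n denotes the sum over all 3-dimensional balanced ballot paths P of length 3n with semisymmetric height at most 4 of the product of b_{u_i} over semisymmetric up-steps of P, with u_i the semisymmetric height of the starting point of the ith up-step. -/
open scoped Classical

/-- Weight of a 3-dimensional path w.r.t. `b`: product over up-steps (steps equal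
to `e_1`) of `b` evaluated at the semisymmetric height of the starting point. -/
noncomputable def wt3 (n : ℕ) (b : ℕ → ℤ) (P : Fin (3*n) → Fin 3) : ℤ :=
  ∏ t : Fin (3*n), if (P t : ℕ) = 0 then b (ptHt 3 n P (t : ℕ)).toNat else 1

/-- The `n`th 3-dimensional 4-bounded semisymmetric weighted Catalan number. -/
noncomputable def A3 (b : ℕ → ℤ) (n : ℕ) : ℤ :=
  ∑ P : Fin (3*n) → Fin 3,
    if IsBBP 3 n P ∧ HeightLE 3 n P 4 then wt3 n b P else 0

/-!
Record a point `x` of a ballot path by `(x₁ - x₂, x₂ - x₃)`. The ballot condition together with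
height at most `4` confines these coordinates to the six lattice points `p, q ≥ 0`, `p + q ≤ 2`,
so `A_n` is a weighted count of closed walks of length `3n` at the origin of a six-vertex graph.
Reading walks three steps at a time, the weighted counts `X_m`, `Y_m` of walks of length `3m`
from `(0, 0)`, resp. `(1, 1)`, to the origin satisfy `X_{m+1} = b₀ X_m + 2 b₀ b₂ Y_m` and
`Y_{m+1} = 2 X_m + 3 b₂ Y_m`; the characteristic polynomial `t² - (b₀ + 3 b₂) t - b₀ b₂` of this
system gives the recurrence.
-/

open Finset

theorem Nat.forall_le_succ_left {m : ℕ} {p : ℕ → Prop} :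
    (∀ i ≤ m + 1, p i) ↔ p 0 ∧ ∀ i ≤ m, p (i + 1) := by
  simpa only [Nat.lt_succ_iff] using Nat.forall_lt_succ_left (n := m + 1) (p := p)

theorem List.count_eq_sum_map_ite {α : Type*} [DecidableEq α] (a : α) (l : List α) :
    l.count a = (l.map fun x => if x = a then 1 else 0).sum := by
  induction l with
  | nil => rfl
  | cons x l ih => simp [List.count_cons, ih, add_comm]

theorem Fin.sum_univ_pi_succ {α M : Type*} [Fintype α] [AddCommMonoid M] {m : ℕ}
    (f : (Fin (m + 1) → α) → M) :
    ∑ P, f P = ∑ a, ∑ P : Fin m → α, f (Fin.cons a P) := by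
  rw [← (Fin.consEquiv fun _ => α).sum_comp, Fintype.sum_prod_type]
  rfl

section Counts

variable {k n : ℕ} (P : Fin (k * n) → Fin k)

theorem count_take_ofFn_eq_cnt (j : Fin k) (i : ℕ) :
    ((List.ofFn P).take i).count j = cnt k n P j i := by
  rw [List.count_eq_sum_map_ite, List.map_take, List.map_ofFn, List.sum_take_ofFn, cnt,
    card_filter, sum_filter]
  simp [ite_and]

theorem sum_cnt_length : ∑ j, cnt k n P j (k * n) = k * n := by
  have hcnt : ∀ j, cnt k n P j (k * n) = #{t | P t = j} := fun j => by simp [cnt]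
  simp only [hcnt]
  rw [← card_eq_sum_card_fiberwise (fun t _ => mem_univ (P t)), card_univ, Fintype.card_fin]

end Counts

namespace BallotWalk

/-- The step `e_(a+1)` moves `(x₁ - x₂, x₂ - x₃)` by `incr a`. In these coordinates the ballot
condition reads `p, q ≥ 0` and the semisymmetric height is `2 (p + q)`. -/
def incr : Fin 3 → ℤ × ℤ := ![(1, 0), (-1, 1), (0, -1)]

def disp (l : List (Fin 3)) : ℤ × ℤ := (l.map incr).sum

@[simp] theorem disp_nil : disp [] = 0 := rfl

@[simp] theorem disp_cons (a : Fin 3) (l : List (Fin 3)) : disp (a :: l) = incr a + disp l :=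
  List.sum_cons

theorem disp_eq_counts (l : List (Fin 3)) :
    disp l = ((l.count 0 : ℤ) - l.count 1, (l.count 1 : ℤ) - l.count 2) := by
  induction l with
  | nil => rfl
  | cons a l ih =>
    rw [disp_cons, ih]
    fin_cases a <;> simp [incr, Prod.ext_iff] <;> omega

def Admissible (s : ℤ × ℤ) : Prop := 0 ≤ s.1 ∧ 0 ≤ s.2 ∧ s.1 + s.2 ≤ 2

instance : DecidablePred Admissible := fun _ => inferInstanceAs (Decidable (_ ∧ _ ∧ _))

def upWeight (b : ℕ → ℤ) (s : ℤ × ℤ) (a : Fin 3) : ℤ :=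
  if a = 0 then b (2 * (s.1 + s.2)).toNat else 1

def stepWeight (b : ℕ → ℤ) (s : ℤ × ℤ) (a : Fin 3) : ℤ :=
  if Admissible (s + incr a) then upWeight b s a else 0

def walkWeight (b : ℕ → ℤ) : ℤ × ℤ → List (Fin 3) → ℤ
  | s, [] => if s = 0 then 1 else 0
  | s, a :: l => stepWeight b s a * walkWeight b (s + incr a) l

def walkSum (b : ℕ → ℤ) (s : ℤ × ℤ) (m : ℕ) : ℤ :=
  ∑ P : Fin m → Fin 3, walkWeight b s (List.ofFn P)

variable (b : ℕ → ℤ)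

theorem walkWeight_ofFn {m : ℕ} (P : Fin m → Fin 3) {s : ℤ × ℤ} (hs : Admissible s) :
    walkWeight b s (List.ofFn P) =
      if (∀ i ≤ m, Admissible (s + disp ((List.ofFn P).take i))) ∧ s + disp (List.ofFn P) = 0
      then ∏ t : Fin m, upWeight b (s + disp ((List.ofFn P).take t)) (P t) else 0 := by
  induction m generalizing s with
  | zero => simp [walkWeight, hs]
  | succ m ih =>
    simp only [List.ofFn_succ, walkWeight, stepWeight, Nat.forall_le_succ_left,
      List.take_succ_cons, List.take_zero, Fin.prod_univ_succ, Fin.val_succ, Fin.val_zero,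
      disp_cons, disp_nil, add_zero, ← add_assoc]
    by_cases hstep : Admissible (s + incr (P 0))
    · rw [if_pos hstep, ih _ hstep, mul_ite, mul_zero]
      simp [hs, upWeight]
    · rw [if_neg hstep, zero_mul, if_neg]
      rintro ⟨⟨-, hadm⟩, -⟩
      exact hstep (by simpa using hadm 0 (Nat.zero_le m))

section BalancedBallotPath

variable {n : ℕ} (P : Fin (3 * n) → Fin 3)

theorem disp_take_ofFn (i : ℕ) :
    disp ((List.ofFn P).take i) =
      ((cnt 3 n P 0 i : ℤ) - cnt 3 n P 1 i, (cnt 3 n P 1 i : ℤ) - cnt 3 n P 2 i) := by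
  simp only [disp_eq_counts, count_take_ofFn_eq_cnt]

theorem ptHt_three (i : ℕ) :
    ptHt 3 n P i = 2 * ((disp ((List.ofFn P).take i)).1 + (disp ((List.ofFn P).take i)).2) := by
  rw [ptHt, Fin.sum_univ_three, disp_take_ofFn]
  simp only [Fin.val_zero, Fin.val_one, Fin.val_two]
  push_cast
  ring

theorem isBBP_three_iff :
    IsBBP 3 n P ↔
      (∀ i ≤ 3 * n, 0 ≤ (disp ((List.ofFn P).take i)).1 ∧ 0 ≤ (disp ((List.ofFn P).take i)).2) ∧
        disp (List.ofFn P) = 0 := by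
  have htotal := sum_cnt_length P
  rw [Fin.sum_univ_three] at htotal
  have hend : disp (List.ofFn P) = ((cnt 3 n P 0 (3 * n) : ℤ) - cnt 3 n P 1 (3 * n),
      (cnt 3 n P 1 (3 * n) : ℤ) - cnt 3 n P 2 (3 * n)) := by
    rw [← disp_take_ofFn, List.take_of_length_le (by simp)]
  simp only [disp_take_ofFn, hend, Prod.ext_iff, Prod.fst_zero, Prod.snd_zero, sub_nonneg,
    sub_eq_zero, Nat.cast_le, Nat.cast_inj]
  constructor
  · rintro ⟨hbal, hmono⟩
    exact ⟨fun i hi => ⟨hmono i hi 0 1 (by decide), hmono i hi 1 2 (by decide)⟩,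
      by rw [hbal 0, hbal 1], by rw [hbal 1, hbal 2]⟩
  · rintro ⟨hmono, h01, h12⟩
    refine ⟨fun j => ?_, fun i hi j j' hjj' => ?_⟩
    · fin_cases j <;> simp <;> omega
    · have := hmono i hi
      fin_cases j <;> fin_cases j' <;> simp at hjj' ⊢ <;> omega

theorem heightLE_three_iff (u : ℤ) :
    HeightLE 3 n P u ↔
      ∀ i ≤ 3 * n, 2 * ((disp ((List.ofFn P).take i)).1 + (disp ((List.ofFn P).take i)).2) ≤ u := by
  simp only [HeightLE, ptHt_three]

theorem isBBP_three_and_heightLE_four_iff :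
    IsBBP 3 n P ∧ HeightLE 3 n P 4 ↔
      (∀ i ≤ 3 * n, Admissible (disp ((List.ofFn P).take i))) ∧ disp (List.ofFn P) = 0 := by
  rw [isBBP_three_iff, heightLE_three_iff]
  constructor
  · rintro ⟨⟨hpos, hend⟩, hht⟩
    exact ⟨fun i hi => ⟨(hpos i hi).1, (hpos i hi).2, by linarith [hht i hi]⟩, hend⟩
  · rintro ⟨hadm, hend⟩
    exact ⟨⟨fun i hi => ⟨(hadm i hi).1, (hadm i hi).2.1⟩, hend⟩,
      fun i hi => by linarith [(hadm i hi).2.2]⟩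

theorem wt3_eq_prod_upWeight :
    wt3 n b P = ∏ t : Fin (3 * n), upWeight b (disp ((List.ofFn P).take t)) (P t) := by
  refine prod_congr rfl fun t _ => ?_
  simp only [upWeight, ptHt_three, Fin.val_eq_zero_iff]

end BalancedBallotPath

theorem A3_eq_walkSum (n : ℕ) : A3 b n = walkSum b 0 (3 * n) := by
  refine sum_congr rfl fun P _ => ?_
  rw [walkWeight_ofFn b P (by decide)]
  simp only [zero_add]
  exact if_congr (isBBP_three_and_heightLE_four_iff P) (wt3_eq_prod_upWeight b P) rfl

theorem walkSum_zero (s : ℤ × ℤ) : walkSum b s 0 = if s = 0 then 1 else 0 := by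
  simp [walkSum, walkWeight]

theorem walkSum_succ (s : ℤ × ℤ) (m : ℕ) :
    walkSum b s (m + 1) = ∑ a, stepWeight b s a * walkSum b (s + incr a) m := by
  simp only [walkSum, Fin.sum_univ_pi_succ, List.ofFn_succ, Fin.cons_zero, Fin.cons_succ,
    walkWeight, mul_sum]

theorem walkSum_origin_succ (m : ℕ) : walkSum b 0 (m + 1) = b 0 * walkSum b (1, 0) m := by
  simp [walkSum_succ, Fin.sum_univ_three, stepWeight, upWeight, incr, Admissible]

theorem walkSum_one_zero_succ (m : ℕ) :
    walkSum b (1, 0) (m + 1) = b 2 * walkSum b (2, 0) m + walkSum b (0, 1) m := by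
  simp [walkSum_succ, Fin.sum_univ_three, stepWeight, upWeight, incr, Admissible]

theorem walkSum_zero_one_succ (m : ℕ) :
    walkSum b (0, 1) (m + 1) = b 2 * walkSum b (1, 1) m + walkSum b 0 m := by
  simp [walkSum_succ, Fin.sum_univ_three, stepWeight, upWeight, incr, Admissible, Prod.mk_zero_zero]

theorem walkSum_two_zero_succ (m : ℕ) : walkSum b (2, 0) (m + 1) = walkSum b (1, 1) m := by
  simp [walkSum_succ, Fin.sum_univ_three, stepWeight, upWeight, incr, Admissible]

theorem walkSum_one_one_succ (m : ℕ) :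
    walkSum b (1, 1) (m + 1) = walkSum b (0, 2) m + walkSum b (1, 0) m := by
  simp [walkSum_succ, Fin.sum_univ_three, stepWeight, upWeight, incr, Admissible]

theorem walkSum_zero_two_succ (m : ℕ) : walkSum b (0, 2) (m + 1) = walkSum b (0, 1) m := by
  simp [walkSum_succ, Fin.sum_univ_three, stepWeight, upWeight, incr, Admissible]

theorem walkSum_origin_add_three (m : ℕ) :
    walkSum b 0 (m + 3) = b 0 * walkSum b 0 m + 2 * b 0 * b 2 * walkSum b (1, 1) m := by
  rw [walkSum_origin_succ, walkSum_one_zero_succ, walkSum_two_zero_succ, walkSum_zero_one_succ]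
  ring

theorem walkSum_one_one_add_three (m : ℕ) :
    walkSum b (1, 1) (m + 3) = 2 * walkSum b 0 m + 3 * b 2 * walkSum b (1, 1) m := by
  rw [walkSum_one_one_succ, walkSum_zero_two_succ, walkSum_one_zero_succ, walkSum_zero_one_succ,
    walkSum_two_zero_succ]
  ring

end BallotWalk

open BallotWalk

theorem stmt7 (b : ℕ → ℤ) :
    A3 b 0 = 1 ∧ A3 b 1 = b 0 ∧
    ∀ n : ℕ, A3 b (n+2) = (b 0 + 3 * b 2) * A3 b (n+1) + b 0 * b 2 * A3 b n := by
  have x_rec (m : ℕ) : walkSum b 0 (3 * (m + 1)) =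
      b 0 * walkSum b 0 (3 * m) + 2 * b 0 * b 2 * walkSum b (1, 1) (3 * m) :=
    walkSum_origin_add_three b (3 * m)
  have y_rec (m : ℕ) : walkSum b (1, 1) (3 * (m + 1)) =
      2 * walkSum b 0 (3 * m) + 3 * b 2 * walkSum b (1, 1) (3 * m) :=
    walkSum_one_one_add_three b (3 * m)
  simp only [A3_eq_walkSum]
  refine ⟨by simp [walkSum_zero], by simp [x_rec 0, walkSum_zero], fun n => ?_⟩
  linear_combination x_rec (n + 1) + 2 * b 0 * b 2 * y_rec n - 3 * b 2 * x_rec n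
end

section
/- For every integer n ≥ 0, the number of 3-dimensional balanced ballot paths of length 3n whose semisymmetric height is at most 4 equals (1/(2√5))·((1+√5)·(2−√5)^n − (1−√5)·(2+√5)^n). Equivalently, this count satisfies the recurrence a_n = 4a_{n-1} + a_{n-2} with a_0 = a_1 = 1. -/
open scoped Classical

/-- The number of 3-dimensional balanced ballot paths of length `3*n` with
semisymmetric height at most 4. -/
noncomputable def a8 (n : ℕ) : ℕ :=
  Nat.card {P : Fin (3*n) → Fin 3 // IsBBP 3 n P ∧ HeightLE 3 n P 4}


/-- Number of steps among the first `i` steps of `P` equal to `j`, free length. -/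
def ct (m : ℕ) (P : Fin m → Fin 3) (j : Fin 3) (i : ℕ) : ℕ :=
  (Finset.univ.filter (fun t : Fin m => (t : ℕ) < i ∧ P t = j)).card

def stt (m : ℕ) (P : Fin m → Fin 3) (i : ℕ) : ℤ × ℤ :=
  ((ct m P 0 i : ℤ) - ct m P 1 i, (ct m P 1 i : ℤ) - ct m P 2 i)

def InS (s : ℤ × ℤ) : Prop := 0 ≤ s.1 ∧ 0 ≤ s.2 ∧ s.1 + s.2 ≤ 2

noncomputable def W (m : ℕ) (s : ℤ × ℤ) : ℕ :=
  Nat.card {P : Fin m → Fin 3 // (∀ i ≤ m, InS (stt m P i)) ∧ stt m P m = s}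

lemma ct_zero (m : ℕ) (P : Fin m → Fin 3) (j : Fin 3) : ct m P j 0 = 0 := by
  simp [ct]

lemma ct_succ (m : ℕ) (P : Fin m → Fin 3) (j : Fin 3) (i : ℕ) (h : i < m) :
    ct m P j (i+1) = ct m P j i + (if P ⟨i, h⟩ = j then 1 else 0) := by
  classical
  unfold ct
  have hsplit : (Finset.univ.filter (fun t : Fin m => (t : ℕ) < i + 1 ∧ P t = j))
      = (Finset.univ.filter (fun t : Fin m => (t : ℕ) < i ∧ P t = j)) ∪
        (Finset.univ.filter (fun t : Fin m => (t : ℕ) = i ∧ P t = j)) := by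
    ext t
    simp only [Finset.mem_filter, Finset.mem_union, Finset.mem_univ, true_and]
    constructor
    · rintro ⟨h1, h2⟩
      rcases Nat.lt_succ_iff_lt_or_eq.mp h1 with h1 | h1
      · exact Or.inl ⟨h1, h2⟩
      · exact Or.inr ⟨h1, h2⟩
    · rintro (⟨h1, h2⟩ | ⟨h1, h2⟩)
      · exact ⟨Nat.lt_succ_of_lt h1, h2⟩
      · exact ⟨by omega, h2⟩
  have hdisj : Disjoint (Finset.univ.filter (fun t : Fin m => (t : ℕ) < i ∧ P t = j))
      (Finset.univ.filter (fun t : Fin m => (t : ℕ) = i ∧ P t = j)) := by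
    rw [Finset.disjoint_filter]
    rintro t _ ⟨h1, _⟩ ⟨h2, _⟩; omega
  rw [hsplit, Finset.card_union_of_disjoint hdisj]
  congr 1
  by_cases hp : P ⟨i, h⟩ = j
  · rw [if_pos hp]
    rw [Finset.card_eq_one]
    refine ⟨⟨i, h⟩, ?_⟩
    ext t
    simp only [Finset.mem_filter, Finset.mem_univ, true_and, Finset.mem_singleton]
    constructor
    · rintro ⟨h1, _⟩; exact Fin.ext h1
    · rintro rfl; exact ⟨rfl, hp⟩
  · rw [if_neg hp]
    rw [Finset.card_eq_zero]
    ext t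
    simp only [Finset.mem_filter, Finset.mem_univ, true_and, Finset.notMem_empty, iff_false,
      not_and]
    intro h1 h2
    exact hp (by rwa [show (⟨i, h⟩ : Fin m) = t from (Fin.ext h1.symm)])

lemma ct_init (m : ℕ) (P : Fin (m+1) → Fin 3) (j : Fin 3) (i : ℕ) (hi : i ≤ m) :
    ct m (Fin.init P) j i = ct (m+1) P j i := by
  classical
  unfold ct
  refine Finset.card_bij' (fun t _ => Fin.castSucc t)
      (fun t ht => ⟨(t : ℕ), by
        have := (Finset.mem_filter.mp ht).2.1; omega⟩) ?_ ?_ ?_ ?_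
  · intro t ht
    have h := (Finset.mem_filter.mp ht).2
    simp only [Finset.mem_filter, Finset.mem_univ, true_and]
    refine ⟨h.1, ?_⟩
    rw [← h.2]; rfl
  · intro t ht
    have h := (Finset.mem_filter.mp ht).2
    simp only [Finset.mem_filter, Finset.mem_univ, true_and]
    refine ⟨h.1, ?_⟩
    have he : Fin.castSucc (⟨(t:ℕ), by omega⟩ : Fin m) = t := Fin.ext rfl
    show P (Fin.castSucc ⟨(t:ℕ), by omega⟩) = j
    rw [he]; exact h.2
  · intro t ht; rfl
  · intro t ht; rfl

lemma sum_ct (m : ℕ) (P : Fin m → Fin 3) : ∑ j : Fin 3, ct m P j m = m := by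
  classical
  have h1 : ∀ j : Fin 3, ct m P j m
      = ((Finset.univ : Finset (Fin m)).filter (fun t => P t = j)).card := by
    intro j
    unfold ct
    congr 1
    ext t
    simp [t.isLt]
  simp only [h1]
  rw [← Finset.card_eq_sum_card_fiberwise (f := P) (t := Finset.univ) (fun x _ => Finset.mem_univ _)]
  simp

lemma stt_zero (m : ℕ) (P : Fin m → Fin 3) : stt m P 0 = (0, 0) := by
  simp [stt, ct_zero]

lemma stt_init (m : ℕ) (P : Fin (m+1) → Fin 3) (i : ℕ) (hi : i ≤ m) :
    stt m (Fin.init P) i = stt (m+1) P i := by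
  simp [stt, ct_init m P _ i hi]

def dl (j : Fin 3) : ℤ × ℤ := ![(1,0), (-1,1), (0,-1)] j

lemma stt_succ (m : ℕ) (P : Fin m → Fin 3) (i : ℕ) (h : i < m) :
    stt m P (i+1) = stt m P i + dl (P ⟨i, h⟩) := by
  have h0 := ct_succ m P 0 i h
  have h1 := ct_succ m P 1 i h
  have h2 := ct_succ m P 2 i h
  have hc : P ⟨i, h⟩ = 0 ∨ P ⟨i, h⟩ = 1 ∨ P ⟨i, h⟩ = 2 := by omega
  rcases hc with hc | hc | hc <;>
    rw [hc] at h0 h1 h2 <;>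
    simp only [hc] <;>
    simp_all [stt, dl, Prod.ext_iff] <;> (try constructor) <;> omega

def Cond (m : ℕ) (s : ℤ × ℤ) (P : Fin m → Fin 3) : Prop :=
  (∀ i ≤ m, InS (stt m P i)) ∧ stt m P m = s

lemma W_eq (m : ℕ) (s : ℤ × ℤ) : W m s = Nat.card {P : Fin m → Fin 3 // Cond m s P} := rfl

lemma W_not_inS (m : ℕ) (s : ℤ × ℤ) (hs : ¬ InS s) : W m s = 0 := by
  rw [W_eq, Nat.card_eq_zero]
  exact Or.inl ⟨fun P => hs (P.2.2 ▸ P.2.1 m le_rfl)⟩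

lemma cond_iff (m : ℕ) (s : ℤ × ℤ) (hs : InS s) (j : Fin 3) (P : Fin (m+1) → Fin 3)
    (hl : P (Fin.last m) = j) :
    Cond (m+1) s P ↔ Cond m (s - dl j) (Fin.init P) := by
  have hstep : stt (m+1) P (m+1) = stt (m+1) P m + dl j := by
    have h := stt_succ (m+1) P m (by omega)
    rwa [show (⟨m, by omega⟩ : Fin (m+1)) = Fin.last m from rfl, hl] at h
  constructor
  · rintro ⟨h1, h2⟩
    refine ⟨fun i hi => ?_, ?_⟩
    · rw [stt_init m P i hi]; exact h1 i (by omega)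
    · rw [stt_init m P m le_rfl]
      exact eq_sub_of_add_eq (hstep ▸ h2)
  · rintro ⟨h1, h2⟩
    have hm : stt (m+1) P m = s - dl j := by rw [← stt_init m P m le_rfl]; exact h2
    have hfin : stt (m+1) P (m+1) = s := by rw [hstep, hm, sub_add_cancel]
    refine ⟨fun i hi => ?_, hfin⟩
    rcases Nat.lt_or_ge i (m+1) with h | h
    · rw [← stt_init m P i (by omega)]; exact h1 i (by omega)
    · have : i = m + 1 := by omega
      subst this; rw [hfin]; exact hs

lemma W_succ (m : ℕ) (s : ℤ × ℤ) (hs : InS s) :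
    W (m+1) s = ∑ j : Fin 3, W m (s - dl j) := by
  classical
  have key : ∀ j : Fin 3,
      Nat.card {P : Fin (m+1) → Fin 3 // Cond (m+1) s P ∧ P (Fin.last m) = j}
        = W m (s - dl j) := by
    intro j
    rw [W_eq]
    apply Nat.card_congr
    refine ⟨fun P => ⟨Fin.init P.1, (cond_iff m s hs j P.1 P.2.2).mp P.2.1⟩,
      fun Q => ⟨Fin.snoc Q.1 j, ⟨(cond_iff m s hs j _ (Fin.snoc_last _ _)).mpr
        (by rw [Fin.init_snoc]; exact Q.2), Fin.snoc_last _ _⟩⟩, ?_, ?_⟩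
    · intro P
      apply Subtype.ext
      show Fin.snoc (α := fun _ => Fin 3) (Fin.init P.1) j = P.1
      have h2 := P.2.2
      calc Fin.snoc (α := fun _ => Fin 3) (Fin.init P.1) j
          = Fin.snoc (α := fun _ => Fin 3) (Fin.init P.1) (P.1 (Fin.last m)) := by rw [h2]
        _ = P.1 := by simp
    · intro Q
      apply Subtype.ext
      show Fin.init (Fin.snoc (α := fun _ => Fin 3) Q.1 j) = Q.1
      simp
  have hsig : W (m+1) s
      = Nat.card (Σ j : Fin 3, {P : Fin (m+1) → Fin 3 // Cond (m+1) s P ∧ P (Fin.last m) = j}) := by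
    rw [W_eq]
    refine Nat.card_congr ?_
    refine ((Equiv.sigmaFiberEquiv (fun P : {P : Fin (m+1) → Fin 3 // Cond (m+1) s P} =>
      P.1 (Fin.last m))).symm.trans (Equiv.sigmaCongrRight fun j =>
      Equiv.subtypeSubtypeEquivSubtypeInter
        (fun P : Fin (m+1) → Fin 3 => Cond (m+1) s P)
        (fun P => P (Fin.last m) = j)))
  rw [hsig, Nat.card_eq_fintype_card, Fintype.card_sigma]
  congr 1
  ext j
  rw [← key j, Nat.card_eq_fintype_card]

lemma dl0 : dl 0 = (1, 0) := rfl
lemma dl1 : dl 1 = (-1, 1) := rfl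
lemma dl2 : dl 2 = (0, -1) := rfl

lemma W_s0 (m : ℕ) : W (m+1) (0,0) = W m (0,1) := by
  rw [W_succ m (0,0) (by norm_num [InS]), Fin.sum_univ_three, dl0, dl1, dl2,
    show ((0:ℤ),(0:ℤ)) - (1,0) = (-1,0) by norm_num [Prod.ext_iff],
    show ((0:ℤ),(0:ℤ)) - (-1,1) = (1,-1) by norm_num [Prod.ext_iff],
    show ((0:ℤ),(0:ℤ)) - (0,-1) = (0,1) by norm_num [Prod.ext_iff],
    W_not_inS m (-1,0) (by norm_num [InS]), W_not_inS m (1,-1) (by norm_num [InS])]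
  omega

lemma W_s1 (m : ℕ) : W (m+1) (1,0) = W m (0,0) + W m (1,1) := by
  rw [W_succ m (1,0) (by norm_num [InS]), Fin.sum_univ_three, dl0, dl1, dl2,
    show ((1:ℤ),(0:ℤ)) - (1,0) = (0,0) by norm_num [Prod.ext_iff],
    show ((1:ℤ),(0:ℤ)) - (-1,1) = (2,-1) by norm_num [Prod.ext_iff],
    show ((1:ℤ),(0:ℤ)) - (0,-1) = (1,1) by norm_num [Prod.ext_iff],
    W_not_inS m (2,-1) (by norm_num [InS])]
  omega

lemma W_s2 (m : ℕ) : W (m+1) (2,0) = W m (1,0) := by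
  rw [W_succ m (2,0) (by norm_num [InS]), Fin.sum_univ_three, dl0, dl1, dl2,
    show ((2:ℤ),(0:ℤ)) - (1,0) = (1,0) by norm_num [Prod.ext_iff],
    show ((2:ℤ),(0:ℤ)) - (-1,1) = (3,-1) by norm_num [Prod.ext_iff],
    show ((2:ℤ),(0:ℤ)) - (0,-1) = (2,1) by norm_num [Prod.ext_iff],
    W_not_inS m (3,-1) (by norm_num [InS]), W_not_inS m (2,1) (by norm_num [InS])]
  omega

lemma W_s3 (m : ℕ) : W (m+1) (0,1) = W m (1,0) + W m (0,2) := by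
  rw [W_succ m (0,1) (by norm_num [InS]), Fin.sum_univ_three, dl0, dl1, dl2,
    show ((0:ℤ),(1:ℤ)) - (1,0) = (-1,1) by norm_num [Prod.ext_iff],
    show ((0:ℤ),(1:ℤ)) - (-1,1) = (1,0) by norm_num [Prod.ext_iff],
    show ((0:ℤ),(1:ℤ)) - (0,-1) = (0,2) by norm_num [Prod.ext_iff],
    W_not_inS m (-1,1) (by norm_num [InS])]
  omega

lemma W_s4 (m : ℕ) : W (m+1) (1,1) = W m (0,1) + W m (2,0) := by
  rw [W_succ m (1,1) (by norm_num [InS]), Fin.sum_univ_three, dl0, dl1, dl2,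
    show ((1:ℤ),(1:ℤ)) - (1,0) = (0,1) by norm_num [Prod.ext_iff],
    show ((1:ℤ),(1:ℤ)) - (-1,1) = (2,0) by norm_num [Prod.ext_iff],
    show ((1:ℤ),(1:ℤ)) - (0,-1) = (1,2) by norm_num [Prod.ext_iff],
    W_not_inS m (1,2) (by norm_num [InS])]
  omega

lemma W_s5 (m : ℕ) : W (m+1) (0,2) = W m (1,1) := by
  rw [W_succ m (0,2) (by norm_num [InS]), Fin.sum_univ_three, dl0, dl1, dl2,
    show ((0:ℤ),(2:ℤ)) - (1,0) = (-1,2) by norm_num [Prod.ext_iff],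
    show ((0:ℤ),(2:ℤ)) - (-1,1) = (1,1) by norm_num [Prod.ext_iff],
    show ((0:ℤ),(2:ℤ)) - (0,-1) = (0,3) by norm_num [Prod.ext_iff],
    W_not_inS m (-1,2) (by norm_num [InS]), W_not_inS m (0,3) (by norm_num [InS])]
  omega

lemma W_key (m : ℕ) : W (m+6) (0,0) = 4 * W (m+3) (0,0) + W m (0,0) := by
  have e1 : W (m+6) (0,0) = W (m+5) (0,1) := W_s0 (m+5)
  have e2 : W (m+5) (0,1) = W (m+4) (1,0) + W (m+4) (0,2) := W_s3 (m+4)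
  have e3 : W (m+4) (1,0) = W (m+3) (0,0) + W (m+3) (1,1) := W_s1 (m+3)
  have e4 : W (m+4) (0,2) = W (m+3) (1,1) := W_s5 (m+3)
  have e5 : W (m+3) (1,1) = W (m+2) (0,1) + W (m+2) (2,0) := W_s4 (m+2)
  have e6 : W (m+3) (0,0) = W (m+2) (0,1) := W_s0 (m+2)
  have e7 : W (m+2) (2,0) = W (m+1) (1,0) := W_s2 (m+1)
  have e8 : W (m+2) (0,1) = W (m+1) (1,0) + W (m+1) (0,2) := W_s3 (m+1)
  have e9 : W (m+1) (1,0) = W m (0,0) + W m (1,1) := W_s1 m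
  have e10 : W (m+1) (0,2) = W m (1,1) := W_s5 m
  omega

lemma ct_fin0 (P : Fin 0 → Fin 3) (j : Fin 3) (i : ℕ) : ct 0 P j i = 0 := by
  simp [ct]

lemma W_zero00 : W 0 (0,0) = 1 := by
  rw [W_eq]
  have hc : ∀ P : Fin 0 → Fin 3, Cond 0 (0,0) P := by
    intro P
    constructor
    · intro i _
      show InS (stt 0 P i)
      simp [stt, ct_fin0, InS]
    · simp [stt, ct_fin0]
  rw [Nat.card_congr (Equiv.subtypeUnivEquiv hc)]
  rw [Nat.card_eq_fintype_card]
  simp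

lemma W_zero11 : W 0 (1,1) = 0 := by
  rw [W_eq, Nat.card_eq_zero]
  refine Or.inl ⟨fun P => ?_⟩
  have h := P.2.2
  simp [stt, ct_fin0, Prod.ext_iff] at h

lemma W_three : W 3 (0,0) = 1 := by
  have e1 : W 3 (0,0) = W 2 (0,1) := W_s0 2
  have e2 : W 2 (0,1) = W 1 (1,0) + W 1 (0,2) := W_s3 1
  have e3 : W 1 (1,0) = W 0 (0,0) + W 0 (1,1) := W_s1 0
  have e4 : W 1 (0,2) = W 0 (1,1) := W_s5 0
  rw [e1, e2, e3, e4, W_zero00, W_zero11]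

lemma cnt_eq_ct (n : ℕ) (P : Fin (3*n) → Fin 3) (j : Fin 3) (i : ℕ) :
    cnt 3 n P j i = ct (3*n) P j i := rfl

lemma ptHt_eq (n : ℕ) (P : Fin (3*n) → Fin 3) (i : ℕ) :
    ptHt 3 n P i = 2 * (cnt 3 n P 0 i : ℤ) - 2 * (cnt 3 n P 2 i) := by
  rw [ptHt, Fin.sum_univ_three]
  norm_num
  ring

lemma goodIff (n : ℕ) (P : Fin (3*n) → Fin 3) :
    (IsBBP 3 n P ∧ HeightLE 3 n P 4) ↔ Cond (3*n) (0,0) P := by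
  constructor
  · rintro ⟨⟨hfin, hmono⟩, hht⟩
    constructor
    · intro i hi
      have h01 := hmono i hi 0 1 (by decide)
      have h12 := hmono i hi 1 2 (by decide)
      have hh := hht i hi
      rw [ptHt_eq] at hh
      simp only [cnt_eq_ct] at h01 h12 hh
      simp only [InS, stt]
      refine ⟨by omega, by omega, by omega⟩
    · have h0 := hfin 0
      have h1 := hfin 1
      have h2 := hfin 2
      simp only [cnt_eq_ct] at h0 h1 h2
      simp only [stt, Prod.ext_iff, h0, h1, h2]
      norm_num
  · rintro ⟨hin, hend⟩
    have hsum := sum_ct (3*n) P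
    rw [Fin.sum_univ_three] at hsum
    simp only [stt, Prod.ext_iff] at hend
    refine ⟨⟨?_, ?_⟩, ?_⟩
    · intro j
      have e0 : ct (3*n) P 0 (3*n) = n := by omega
      have e1 : ct (3*n) P 1 (3*n) = n := by omega
      have e2 : ct (3*n) P 2 (3*n) = n := by omega
      fin_cases j
      · exact e0
      · exact e1
      · exact e2
    · intro i hi j j' hjj'
      have h := hin i hi
      simp only [InS, stt] at h
      fin_cases j <;> fin_cases j' <;> simp_all [Fin.le_def, cnt_eq_ct] <;> omega
    · intro i hi
      have h := hin i hi
      simp only [InS, stt] at h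
      rw [ptHt_eq]
      simp only [cnt_eq_ct]
      omega

lemma a8_eq (n : ℕ) : a8 n = W (3*n) (0,0) := by
  rw [a8, W_eq]
  exact Nat.card_congr (Equiv.subtypeEquivRight (goodIff n))

lemma a8_zero : a8 0 = 1 := by
  rw [a8_eq, show 3*0 = 0 from rfl, W_zero00]

lemma a8_one : a8 1 = 1 := by
  rw [a8_eq, show 3*1 = 3 from rfl, W_three]

lemma a8_rec (n : ℕ) : a8 (n+2) = 4 * a8 (n+1) + a8 n := by
  have h2 := a8_eq (n+2)
  have h1 := a8_eq (n+1)
  have h0 := a8_eq n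
  rw [show 3*(n+2) = 3*n+6 by ring] at h2
  rw [show 3*(n+1) = 3*n+3 by ring] at h1
  rw [h2, h1, h0, W_key]

noncomputable def fr (n : ℕ) : ℝ :=
  (1/(2*Real.sqrt 5)) * ((1 + Real.sqrt 5) * (2 - Real.sqrt 5)^n
    - (1 - Real.sqrt 5) * (2 + Real.sqrt 5)^n)

lemma fr_zero : fr 0 = 1 := by
  have hne : Real.sqrt 5 ≠ 0 := by positivity
  simp only [fr, pow_zero]
  field_simp
  ring

lemma fr_one : fr 1 = 1 := by
  have hne : Real.sqrt 5 ≠ 0 := by positivity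
  simp only [fr, pow_one]
  have hs : Real.sqrt 5 ^ 2 = 5 := Real.sq_sqrt (by norm_num)
  field_simp
  ring

lemma fr_rec (n : ℕ) : fr (n+2) = 4 * fr (n+1) + fr n := by
  have hs : Real.sqrt 5 ^ 2 = 5 := Real.sq_sqrt (by norm_num)
  simp only [fr, pow_succ]
  linear_combination ((1 + Real.sqrt 5) * (2 - Real.sqrt 5)^n
      - (1 - Real.sqrt 5) * (2 + Real.sqrt 5)^n) / (2 * Real.sqrt 5) * hs

lemma a8_closed (n : ℕ) : (a8 n : ℝ) = fr n := by
  induction n using Nat.strong_induction_on with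
  | _ n ih =>
    match n with
    | 0 => rw [a8_zero, fr_zero]; norm_num
    | 1 => rw [a8_one, fr_one]; norm_num
    | (k+2) =>
      rw [a8_rec k, fr_rec k]
      push_cast
      rw [ih (k+1) (by omega), ih k (by omega)]

theorem stmt8 :
    (∀ n : ℕ, (a8 n : ℝ) = (1/(2*Real.sqrt 5)) *
      ((1 + Real.sqrt 5) * (2 - Real.sqrt 5)^n
        - (1 - Real.sqrt 5) * (2 + Real.sqrt 5)^n)) ∧
    a8 0 = 1 ∧ a8 1 = 1 ∧ ∀ n : ℕ, a8 (n+2) = 4 * a8 (n+1) + a8 n := by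
  exact ⟨fun n => a8_closed n, a8_zero, a8_one, fun n => a8_rec n⟩
end

section
/- Let m, u be positive integers, k ≥ 2, and b, c integer sequences. The sequence of k-dimensional u-bounded semisymmetric weighted Catalan numbers modulo m (indexed by n ≥ 0) is eventually periodic. -/
open scoped Classical

/-- Semisymmetric weight of a path w.r.t. `(b, c)`: product of `b` at the
height of the starting point over up-steps (indices `< k/2`), times the
product of `c` at the height of the resulting point over the other steps. -/
noncomputable def sswt (k n : ℕ) (b c : ℕ → ℤ) (P : Fin (k*n) → Fin k) : ℤ :=
  ∏ t : Fin (k*n),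
    if (P t : ℕ) < k/2 then b (ptHt k n P (t : ℕ)).toNat
    else c (ptHt k n P ((t : ℕ)+1)).toNat

/-- The `n`th `k`-dimensional `u`-bounded semisymmetric weighted Catalan number. -/
noncomputable def SSWCNb (k : ℕ) (u : ℤ) (b c : ℕ → ℤ) (n : ℕ) : ℤ :=
  ∑ P : Fin (k*n) → Fin k,
    if IsBBP k n P ∧ HeightLE k n P u then sswt k n b c P else 0


section General

def cntG (k t : ℕ) (Q : Fin t → Fin k) (j : Fin k) (i : ℕ) : ℕ :=
  (Finset.univ.filter (fun s : Fin t => (s : ℕ) < i ∧ Q s = j)).card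

lemma cntG_eq_sum (k t : ℕ) (Q : Fin t → Fin k) (j : Fin k) (i : ℕ) :
    cntG k t Q j i = ∑ x : Fin t, if ((x : ℕ) < i ∧ Q x = j) then 1 else 0 :=
  Finset.card_filter _ _

def hV (k : ℕ) (v : Fin k → ℤ) : ℤ := ∑ j : Fin k, ((k : ℤ) - 1 - 2*(j : ℕ)) * v j

def htG (k t : ℕ) (Q : Fin t → Fin k) (i : ℕ) : ℤ :=
  ∑ j : Fin k, ((k : ℤ) - 1 - 2*(j : ℕ)) * (cntG k t Q j i)

lemma htG_eq_hV (k t : ℕ) (Q : Fin t → Fin k) (i : ℕ) :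
    htG k t Q i = hV k (fun j => (cntG k t Q j i : ℤ)) := rfl

def wtG (k t : ℕ) (b c : ℕ → ℤ) (Q : Fin t → Fin k) : ℤ :=
  ∏ s : Fin t,
    if (Q s : ℕ) < k/2 then b (htG k t Q (s : ℕ)).toNat
    else c (htG k t Q ((s : ℕ)+1)).toNat

def ValidG (k t : ℕ) (u : ℤ) (Q : Fin t → Fin k) : Prop :=
  (∀ i ≤ t, ∀ j j' : Fin k, j ≤ j' → cntG k t Q j' i ≤ cntG k t Q j i) ∧
  (∀ i ≤ t, htG k t Q i ≤ u)

noncomputable def G (k : ℕ) (u : ℤ) (b c : ℕ → ℤ) (m t : ℕ) (s : Fin k → ℕ) : ZMod m :=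
  ∑ Q : Fin t → Fin k,
    if ValidG k t u Q ∧ (∀ j, cntG k t Q j t = s j) then ((wtG k t b c Q : ℤ) : ZMod m) else 0

lemma cntG_snoc_le {k t : ℕ} (Q : Fin t → Fin k) (j₀ j : Fin k) {i : ℕ} (hi : i ≤ t) :
    cntG k (t+1) (Fin.snoc Q j₀) j i = cntG k t Q j i := by
  rw [cntG_eq_sum, cntG_eq_sum, Fin.sum_univ_castSucc]
  simp only [Fin.snoc_castSucc, Fin.coe_castSucc, Fin.snoc_last, Fin.val_last]
  rw [if_neg (fun h => absurd h.1 (by omega))]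
  simp

lemma cntG_snoc_top {k t : ℕ} (Q : Fin t → Fin k) (j₀ j : Fin k) :
    cntG k (t+1) (Fin.snoc Q j₀) j (t+1) = cntG k t Q j t + (if j₀ = j then 1 else 0) := by
  rw [cntG_eq_sum, cntG_eq_sum, Fin.sum_univ_castSucc]
  simp only [Fin.snoc_castSucc, Fin.coe_castSucc, Fin.snoc_last, Fin.val_last]
  congr 1
  · refine Finset.sum_congr rfl fun x _ => ?_
    have h1 : (x : ℕ) < t + 1 := Nat.lt_succ_of_lt x.isLt
    have h2 : (x : ℕ) < t := x.isLt
    simp [h1, h2]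
  · simp

lemma htG_snoc_le {k t : ℕ} (Q : Fin t → Fin k) (j₀ : Fin k) {i : ℕ} (hi : i ≤ t) :
    htG k (t+1) (Fin.snoc Q j₀) i = htG k t Q i := by
  unfold htG
  exact Finset.sum_congr rfl fun j _ => by rw [cntG_snoc_le Q j₀ j hi]

-- Part 2 ----------------------------------------------------------------

def subV {k : ℕ} (s : Fin k → ℕ) (j : Fin k) : Fin k → ℕ :=
  fun i => s i - if i = j then 1 else 0

def addV {k : ℕ} (s : Fin k → ℕ) (j : Fin k) : Fin k → ℕ :=
  fun i => s i + if i = j then 1 else 0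

def ballotV {k : ℕ} (s : Fin k → ℕ) : Prop := ∀ j j' : Fin k, j ≤ j' → s j' ≤ s j

def okV (k : ℕ) (u : ℤ) (s : Fin k → ℕ) : Prop :=
  ballotV s ∧ hV k (fun i => (s i : ℤ)) ≤ u

lemma cond_snoc_iff {k t : ℕ} {u : ℤ} (Q : Fin t → Fin k) (j : Fin k) (s : Fin k → ℕ) :
    (ValidG k (t+1) u (Fin.snoc Q j) ∧ ∀ j', cntG k (t+1) (Fin.snoc Q j) j' (t+1) = s j')
    ↔ ((1 ≤ s j ∧ okV k u s) ∧
        (ValidG k t u Q ∧ ∀ j', cntG k t Q j' t = subV s j j')) := by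
  constructor
  · rintro ⟨⟨hb, hh⟩, hc⟩
    have hc' : ∀ j', cntG k t Q j' t + (if j = j' then 1 else 0) = s j' := by
      intro j'; rw [← cntG_snoc_top]; exact hc j'
    have hsj : 1 ≤ s j := by have := hc' j; simp at this; omega
    have hsub : ∀ j', cntG k t Q j' t = subV s j j' := by
      intro j'
      have := hc' j'
      unfold subV
      by_cases h : j' = j
      · subst h; simp at this ⊢; omega
      · have h' : ¬ (j = j') := fun hh' => h hh'.symm
        simp [h, h'] at this ⊢; omega
    refine ⟨⟨hsj, ?_, ?_⟩, ⟨?_, ?_⟩, hsub⟩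
    · intro j1 j2 h
      have := hb (t+1) le_rfl j1 j2 h
      rwa [hc j1, hc j2] at this
    · have := hh (t+1) le_rfl
      have e : htG k (t+1) (Fin.snoc Q j) (t+1) = hV k (fun i => (s i : ℤ)) := by
        unfold htG hV
        exact Finset.sum_congr rfl fun j' _ => by rw [hc j']
      rwa [e] at this
    · intro i hi j1 j2 h
      have := hb i (le_trans hi (Nat.le_succ t)) j1 j2 h
      rwa [cntG_snoc_le _ _ _ hi, cntG_snoc_le _ _ _ hi] at this
    · intro i hi
      have := hh i (le_trans hi (Nat.le_succ t))
      rwa [htG_snoc_le _ _ hi] at this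
  · rintro ⟨⟨hsj, hbal, hht⟩, ⟨hb, hh⟩, hc⟩
    have hcnt : ∀ j', cntG k (t+1) (Fin.snoc Q j) j' (t+1) = s j' := by
      intro j'
      rw [cntG_snoc_top, hc j']
      unfold subV
      by_cases h : j' = j
      · subst h; simp; omega
      · have h' : ¬ (j = j') := fun hh' => h hh'.symm
        simp [h, h']
    refine ⟨⟨?_, ?_⟩, hcnt⟩
    · intro i hi j1 j2 h
      rcases Nat.lt_or_ge i (t+1) with hit | hit
      · have hit' : i ≤ t := by omega
        rw [cntG_snoc_le _ _ _ hit', cntG_snoc_le _ _ _ hit']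
        exact hb i hit' j1 j2 h
      · have : i = t+1 := by omega
        subst this
        rw [hcnt j1, hcnt j2]
        exact hbal j1 j2 h
    · intro i hi
      rcases Nat.lt_or_ge i (t+1) with hit | hit
      · have hit' : i ≤ t := by omega
        rw [htG_snoc_le _ _ hit']
        exact hh i hit'
      · have : i = t+1 := by omega
        subst this
        have e : htG k (t+1) (Fin.snoc Q j) (t+1) = hV k (fun i => (s i : ℤ)) := by
          unfold htG hV
          exact Finset.sum_congr rfl fun j' _ => by rw [hcnt j']
        rw [e]; exact hht

def wfacN (k : ℕ) (b c : ℕ → ℤ) (s : Fin k → ℕ) (j : Fin k) : ℤ :=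
  if (j : ℕ) < k/2 then b ((hV k fun i => (subV s j i : ℤ)).toNat)
  else c ((hV k fun i => (s i : ℤ)).toNat)

lemma wtG_snoc {k t : ℕ} (b c : ℕ → ℤ) (Q : Fin t → Fin k) (j : Fin k) (s : Fin k → ℕ)
    (hc : ∀ j', cntG k t Q j' t = subV s j j') (hsj : 1 ≤ s j) :
    wtG k (t+1) b c (Fin.snoc Q j) = wtG k t b c Q * wfacN k b c s j := by
  unfold wtG
  rw [Fin.prod_univ_castSucc]
  congr 1
  · refine Finset.prod_congr rfl fun x _ => ?_
    rw [Fin.snoc_castSucc]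
    have h1 : htG k (t+1) (Fin.snoc Q j) ((x.castSucc : ℕ)) = htG k t Q (x : ℕ) := by
      rw [Fin.coe_castSucc]; exact htG_snoc_le _ _ (le_of_lt x.isLt)
    have h2 : htG k (t+1) (Fin.snoc Q j) ((x.castSucc : ℕ)+1) = htG k t Q ((x : ℕ)+1) := by
      rw [Fin.coe_castSucc]; exact htG_snoc_le _ _ x.isLt
    rw [h1, h2]
  · rw [Fin.snoc_last]
    have e1 : htG k (t+1) (Fin.snoc Q j) ((Fin.last t : ℕ)) = hV k (fun i => (subV s j i : ℤ)) := by
      rw [Fin.val_last, htG_snoc_le _ _ le_rfl, htG_eq_hV]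
      unfold hV
      exact Finset.sum_congr rfl fun j' _ => by beta_reduce; rw [hc j']
    have e2 : htG k (t+1) (Fin.snoc Q j) ((Fin.last t : ℕ)+1) = hV k (fun i => (s i : ℤ)) := by
      rw [Fin.val_last, htG_eq_hV]
      unfold hV
      refine Finset.sum_congr rfl fun j' _ => ?_
      beta_reduce
      rw [cntG_snoc_top, hc j']
      congr 1
      unfold subV
      by_cases h : j' = j
      · subst h; simp; omega
      · have h' : ¬ (j = j') := fun hh' => h hh'.symm
        simp [h, h']
    rw [e1, e2, wfacN]

lemma G_rec (k : ℕ) (u : ℤ) (b c : ℕ → ℤ) (m t : ℕ) (s : Fin k → ℕ) :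
    G k u b c m (t+1) s = ∑ j : Fin k,
      if 1 ≤ s j ∧ okV k u s
      then ((wfacN k b c s j : ℤ) : ZMod m) * G k u b c m t (subV s j) else 0 := by
  rw [G, ← Equiv.sum_comp (Fin.snocEquiv (fun _ => Fin k)), Fintype.sum_prod_type]
  refine Finset.sum_congr rfl fun j _ => ?_
  by_cases hok : 1 ≤ s j ∧ okV k u s
  · rw [if_pos hok, G, Finset.mul_sum]
    refine Finset.sum_congr rfl fun Q' _ => ?_
    have hiff : (ValidG k (t+1) u (Fin.snoc Q' j) ∧
        ∀ j', cntG k (t+1) (Fin.snoc Q' j) j' (t+1) = s j')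
        ↔ (ValidG k t u Q' ∧ ∀ j', cntG k t Q' j' t = subV s j j') := by
      rw [cond_snoc_iff]; exact and_iff_right hok
    have : (Fin.snocEquiv (fun _ => Fin k) (j, Q')) = Fin.snoc Q' j := rfl
    rw [this]
    by_cases hQ : ValidG k t u Q' ∧ ∀ j', cntG k t Q' j' t = subV s j j'
    · rw [if_pos (hiff.mpr hQ), if_pos hQ,
        wtG_snoc b c Q' j s hQ.2 hok.1]
      push_cast
      ring
    · rw [if_neg (fun h => hQ (hiff.mp h)), if_neg hQ, mul_zero]
  · rw [if_neg hok]
    refine Finset.sum_eq_zero fun Q' _ => ?_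
    have : (Fin.snocEquiv (fun _ => Fin k) (j, Q')) = Fin.snoc Q' j := rfl
    rw [this]
    exact if_neg (fun h => hok ((cond_snoc_iff Q' j s).mp h).1)

-- Part 3: coefficient reflection ----------------------------------------

lemma coeff_rev (k : ℕ) (j : Fin k) :
    ((k : ℤ) - 1 - 2*((j.rev : ℕ))) = -((k : ℤ) - 1 - 2*(j : ℕ)) := by
  have h := j.isLt
  have e : ((j.rev : ℕ) : ℤ) = (k : ℤ) - 1 - (j : ℕ) := by
    rw [Fin.val_rev]; omega
  rw [e]; ring

lemma sumCoeff (k : ℕ) : ∑ j : Fin k, ((k : ℤ) - 1 - 2*(j : ℕ)) = 0 := by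
  have h := Equiv.sum_comp (Fin.revPerm (n := k))
    (fun j : Fin k => ((k : ℤ) - 1 - 2*(j : ℕ)))
  simp only [Fin.revPerm_apply] at h
  have h2 : ∑ j : Fin k, ((k : ℤ) - 1 - 2*((Fin.rev j : ℕ)))
      = ∑ j : Fin k, -((k : ℤ) - 1 - 2*(j : ℕ)) :=
    Finset.sum_congr rfl fun j _ => coeff_rev k j
  rw [h2, Finset.sum_neg_distrib] at h
  linarith

lemma hV_shift (k : ℕ) (v : Fin k → ℤ) (a : ℤ) : hV k (fun i => v i + a) = hV k v := by
  unfold hV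
  have : ∀ j : Fin k, ((k : ℤ) - 1 - 2*(j : ℕ)) * (v j + a)
      = ((k : ℤ) - 1 - 2*(j : ℕ)) * v j + ((k : ℤ) - 1 - 2*(j : ℕ)) * a := fun j => by ring
  rw [Finset.sum_congr rfl fun j _ => this j, Finset.sum_add_distrib, ← Finset.sum_mul,
    sumCoeff, zero_mul, add_zero]

lemma G_ne_zero {k m t : ℕ} {u : ℤ} {b c : ℕ → ℤ} {s : Fin k → ℕ}
    (h : G k u b c m t s ≠ 0) : okV k u s := by
  rw [G] at h
  obtain ⟨Q, _, hQ⟩ := Finset.exists_ne_zero_of_sum_ne_zero h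
  by_cases hcond : ValidG k t u Q ∧ ∀ j, cntG k t Q j t = s j
  · obtain ⟨⟨hb, hh⟩, hc⟩ := hcond
    constructor
    · intro j j' hle
      have := hb t le_rfl j j' hle
      rwa [hc j, hc j'] at this
    · have hht := hh t le_rfl
      have e : htG k t Q t = hV k fun i => (s i : ℤ) := by
        unfold htG hV
        exact Finset.sum_congr rfl fun j' _ => by beta_reduce; rw [hc j']
      rwa [e] at hht
  · exact absurd (if_neg hcond) hQ

-- reduced layer: k = r+2 --------------------------------------------------

def redOf (r : ℕ) (s : Fin (r+2) → ℕ) : Fin (r+2) → ℤ :=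
  fun i => (s i : ℤ) - (s (Fin.last (r+1)) : ℤ)

lemma hV_red (r : ℕ) (s : Fin (r+2) → ℕ) :
    hV (r+2) (redOf r s) = hV (r+2) (fun i => (s i : ℤ)) := by
  have e : redOf r s = fun i => (s i : ℤ) + (-(s (Fin.last (r+1)) : ℤ)) :=
    funext fun i => by unfold redOf; ring
  rw [e, hV_shift]

lemma uniqS (r : ℕ) (s s' : Fin (r+2) → ℕ) (hsum : ∑ i, s i = ∑ i, s' i)
    (hred : redOf r s = redOf r s') : s = s' := by
  have key : ∀ i, (s i : ℤ) - (s' i : ℤ)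
      = (s (Fin.last (r+1)) : ℤ) - (s' (Fin.last (r+1)) : ℤ) := by
    intro i
    have := congrFun hred i
    unfold redOf at this
    linarith
  have hsum' : ∑ i : Fin (r+2), ((s i : ℤ) - (s' i : ℤ)) = 0 := by
    rw [Finset.sum_sub_distrib]
    have : ((∑ i, s i : ℕ) : ℤ) = ((∑ i, s' i : ℕ) : ℤ) := by exact_mod_cast hsum
    push_cast at this
    omega
  have hconst : ∑ i : Fin (r+2), ((s i : ℤ) - (s' i : ℤ))
      = (r+2) * ((s (Fin.last (r+1)) : ℤ) - (s' (Fin.last (r+1)) : ℤ)) := by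
    rw [Finset.sum_congr rfl fun i _ => key i, Finset.sum_const, Finset.card_univ,
      Fintype.card_fin, nsmul_eq_mul]
    push_cast
    ring
  have hz : (s (Fin.last (r+1)) : ℤ) = (s' (Fin.last (r+1)) : ℤ) := by
    rw [hconst] at hsum'
    have : ((r : ℤ) + 2) ≠ 0 := by positivity
    have := mul_eq_zero.mp hsum'
    omega
  funext i
  have h1 := key i
  omega

lemma red_bound (r : ℕ) (u : ℤ) (s : Fin (r+2) → ℕ) (hok : okV (r+2) u s) :
    ∀ i, 0 ≤ redOf r s i ∧ redOf r s i ≤ 2*u := by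
  obtain ⟨hbal, hht⟩ := hok
  set δ := redOf r s with hδ
  have hnn : ∀ i, 0 ≤ δ i := by
    intro i
    have := hbal i (Fin.last (r+1)) (Fin.le_last i)
    simp only [hδ, redOf]
    omega
  have hmono : ∀ i i' : Fin (r+2), i ≤ i' → δ i' ≤ δ i := by
    intro i i' h
    have := hbal i i' h
    simp only [hδ, redOf]
    omega
  have hlast : δ (Fin.last (r+1)) = 0 := by simp [hδ, redOf]
  have hhd : hV (r+2) δ ≤ u := by rw [hδ, hV_red]; exact hht
  -- reflection
  have hrev : ∑ j : Fin (r+2), (((r:ℤ)+2) - 1 - 2*(j : ℕ)) * δ (Fin.rev j)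
      = - hV (r+2) δ := by
    have h1 := Equiv.sum_comp (Fin.revPerm (n := r+2))
      (fun j : Fin (r+2) => (((r+2 : ℕ) : ℤ) - 1 - 2*((Fin.rev j : ℕ))) * δ j)
    simp only [Fin.revPerm_apply, Fin.rev_rev] at h1
    have h2 : ∑ j : Fin (r+2), (((r+2 : ℕ) : ℤ) - 1 - 2*((Fin.rev j : ℕ))) * δ j
        = - hV (r+2) δ := by
      unfold hV
      rw [← Finset.sum_neg_distrib]
      refine Finset.sum_congr rfl fun j _ => ?_
      rw [coeff_rev]
      push_cast
      ring
    rw [h2] at h1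
    rw [← h1]
    refine Finset.sum_congr rfl fun j _ => ?_
    push_cast
    ring
  have hT : ∑ j : Fin (r+2), (((r:ℤ)+2) - 1 - 2*(j : ℕ)) * (δ j - δ (Fin.rev j))
      = 2 * hV (r+2) δ := by
    have : ∀ j : Fin (r+2), (((r:ℤ)+2) - 1 - 2*(j : ℕ)) * (δ j - δ (Fin.rev j))
        = (((r:ℤ)+2) - 1 - 2*(j : ℕ)) * δ j
          - (((r:ℤ)+2) - 1 - 2*(j : ℕ)) * δ (Fin.rev j) := fun j => by ring
    rw [Finset.sum_congr rfl fun j _ => this j, Finset.sum_sub_distrib, hrev]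
    have : ∑ j : Fin (r+2), (((r:ℤ)+2) - 1 - 2*(j : ℕ)) * δ j = hV (r+2) δ := by
      unfold hV
      refine Finset.sum_congr rfl fun j _ => by push_cast; ring
    rw [this]
    ring
  have hterm : ∀ j : Fin (r+2),
      0 ≤ (((r:ℤ)+2) - 1 - 2*(j : ℕ)) * (δ j - δ (Fin.rev j)) := by
    intro j
    rcases le_or_gt (2*(j:ℕ)) (r+1) with hc | hc
    · have hle : j ≤ Fin.rev j := by
        rw [Fin.le_def, Fin.val_rev]
        omega
      have := hmono j (Fin.rev j) hle
      have hcz : (0:ℤ) ≤ ((r:ℤ)+2) - 1 - 2*(j : ℕ) := by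
        have := j.isLt
        omega
      exact mul_nonneg hcz (by omega)
    · have hle : Fin.rev j ≤ j := by
        rw [Fin.le_def, Fin.val_rev]
        omega
      have := hmono (Fin.rev j) j hle
      have hcz : ((r:ℤ)+2) - 1 - 2*(j : ℕ) ≤ 0 := by omega
      have hd : δ j - δ (Fin.rev j) ≤ 0 := by omega
      nlinarith
  have h0mem : (0 : Fin (r+2)) ∈ (Finset.univ : Finset (Fin (r+2))) := Finset.mem_univ _
  have hsingle := Finset.single_le_sum (fun j _ => hterm j) h0mem
  have hrev0 : Fin.rev (0 : Fin (r+2)) = Fin.last (r+1) := by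
    apply Fin.ext
    rw [Fin.val_rev, Fin.val_last]
    simp
  rw [hT] at hsingle
  have h00 : ((0 : Fin (r+2)) : ℕ) = 0 := rfl
  rw [hrev0, hlast, h00] at hsingle
  norm_num at hsingle
  have hd0 : δ 0 ≤ 2 * u := by
    have hnn0 := hnn 0
    nlinarith [mul_nonneg (by positivity : (0:ℤ) ≤ (r:ℤ)) hnn0]
  intro i
  refine ⟨hnn i, le_trans (hmono 0 i (Fin.zero_le i)) hd0⟩

-- Part 4: reduced state dynamics ------------------------------------------

def toZd (r u' : ℕ) (d : Fin (r+2) → Fin (2*u'+1)) : Fin (r+2) → ℤ :=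
  fun i => ((d i : ℕ) : ℤ)

noncomputable def H (r u' m : ℕ) (b c : ℕ → ℤ) (t : ℕ)
    (d : Fin (r+2) → Fin (2*u'+1)) : ZMod m :=
  if h : ∃ s : Fin (r+2) → ℕ, (∑ i, s i) = t ∧ redOf r s = toZd r u' d
  then G (r+2) (u' : ℤ) b c m t h.choose else 0

lemma H_spec_pos (r u' m : ℕ) (b c : ℕ → ℤ) (t : ℕ)
    (d : Fin (r+2) → Fin (2*u'+1)) (s : Fin (r+2) → ℕ)
    (h1 : ∑ i, s i = t) (h2 : redOf r s = toZd r u' d) :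
    H r u' m b c t d = G (r+2) (u' : ℤ) b c m t s := by
  have hex : ∃ s' : Fin (r+2) → ℕ, (∑ i, s' i) = t ∧ redOf r s' = toZd r u' d := ⟨s, h1, h2⟩
  rw [H, dif_pos hex]
  obtain ⟨e1, e2⟩ := hex.choose_spec
  rw [uniqS r hex.choose s (by rw [e1, h1]) (by rw [e2, h2])]

def predZ (r u' : ℕ) (j : Fin (r+2)) (d : Fin (r+2) → Fin (2*u'+1)) : Fin (r+2) → ℤ :=
  fun i => if j = Fin.last (r+1)
    then ((d i : ℕ) : ℤ) + 1 - (if i = Fin.last (r+1) then 1 else 0)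
    else ((d i : ℕ) : ℤ) - (if i = j then 1 else 0)

def staticD (r u' : ℕ) (d : Fin (r+2) → Fin (2*u'+1)) : Prop :=
  d (Fin.last (r+1)) = 0 ∧ (∀ i i' : Fin (r+2), i ≤ i' → (d i' : ℕ) ≤ (d i : ℕ)) ∧
    hV (r+2) (toZd r u' d) ≤ (u' : ℤ)

def guardD (r u' : ℕ) (j : Fin (r+2)) (d : Fin (r+2) → Fin (2*u'+1)) : Prop :=
  staticD r u' d ∧ ∀ i, 0 ≤ predZ r u' j d i ∧ predZ r u' j d i ≤ 2*(u' : ℤ)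

def predD (r u' : ℕ) (j : Fin (r+2)) (d : Fin (r+2) → Fin (2*u'+1)) :
    Fin (r+2) → Fin (2*u'+1) :=
  fun i => ⟨min (predZ r u' j d i).toNat (2*u'), by omega⟩

lemma toZ_predD (r u' : ℕ) (j : Fin (r+2)) (d : Fin (r+2) → Fin (2*u'+1))
    (h : guardD r u' j d) : toZd r u' (predD r u' j d) = predZ r u' j d := by
  funext i
  obtain ⟨h1, h2⟩ := h.2 i
  simp only [toZd, predD]
  omega

def wfacD (r u' : ℕ) (b c : ℕ → ℤ) (j : Fin (r+2)) (d : Fin (r+2) → Fin (2*u'+1)) : ℤ :=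
  if (j : ℕ) < (r+2)/2 then b ((hV (r+2) (predZ r u' j d)).toNat)
  else c ((hV (r+2) (toZd r u' d)).toNat)

noncomputable def Phi (r u' m : ℕ) (b c : ℕ → ℤ)
    (f : (Fin (r+2) → Fin (2*u'+1)) → ZMod m) :
    (Fin (r+2) → Fin (2*u'+1)) → ZMod m :=
  fun d => ∑ j : Fin (r+2),
    if guardD r u' j d
    then ((wfacD r u' b c j d : ℤ) : ZMod m) * f (predD r u' j d) else 0

lemma sum_addV {k : ℕ} (s : Fin k → ℕ) (j : Fin k) :
    ∑ i, addV s j i = (∑ i, s i) + 1 := by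
  unfold addV
  rw [Finset.sum_add_distrib]
  congr 1
  simp

lemma addV_subV {k : ℕ} (s : Fin k → ℕ) (j : Fin k) (hsj : 1 ≤ s j) :
    addV (subV s j) j = s := by
  funext i
  unfold addV subV
  by_cases h : i = j
  · subst h; simp; omega
  · simp [h]

lemma red_addV (r u' : ℕ) (j : Fin (r+2)) (d : Fin (r+2) → Fin (2*u'+1))
    (s' : Fin (r+2) → ℕ) (h : redOf r s' = predZ r u' j d) :
    redOf r (addV s' j) = toZd r u' d := by
  funext i
  have hi := congrFun h i
  have hl := congrFun h (Fin.last (r+1))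
  simp only [redOf, predZ, addV, toZd] at hi hl ⊢
  split_ifs at hi hl ⊢ <;> (try subst_vars) <;> (try push_cast at hi hl ⊢) <;> omega

lemma red_subV (r u' : ℕ) (j : Fin (r+2)) (d : Fin (r+2) → Fin (2*u'+1))
    (s : Fin (r+2) → ℕ) (h : redOf r s = toZd r u' d) (hsj : 1 ≤ s j) :
    redOf r (subV s j) = predZ r u' j d := by
  funext i
  have hi := congrFun h i
  have hl := congrFun h (Fin.last (r+1))
  have hj' := congrFun h j
  simp only [redOf, subV, predZ, toZd] at hi hl hj' ⊢
  split_ifs at hi hl hj' ⊢ <;> (try subst_vars) <;> (try push_cast at hi hl hj' ⊢) <;> omega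

lemma staticD_of (r u' : ℕ) (s : Fin (r+2) → ℕ) (d : Fin (r+2) → Fin (2*u'+1))
    (hred : redOf r s = toZd r u' d) (hok : okV (r+2) (u' : ℤ) s) :
    staticD r u' d := by
  obtain ⟨hbal, hht⟩ := hok
  refine ⟨?_, ?_, ?_⟩
  · have := congrFun hred (Fin.last (r+1))
    simp only [redOf, toZd] at this
    apply Fin.ext
    simp only [Fin.val_zero]
    omega
  · intro i i' hle
    have h1 := congrFun hred i
    have h2 := congrFun hred i'
    have := hbal i i' hle
    simp only [redOf, toZd] at h1 h2
    omega
  · rw [← hred, hV_red]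
    exact hht

lemma okV_of_static (r u' : ℕ) (s : Fin (r+2) → ℕ) (d : Fin (r+2) → Fin (2*u'+1))
    (hred : redOf r s = toZd r u' d) (hst : staticD r u' d) :
    okV (r+2) (u' : ℤ) s := by
  obtain ⟨_, hmono, hht⟩ := hst
  constructor
  · intro i i' hle
    have h1 := congrFun hred i
    have h2 := congrFun hred i'
    have := hmono i i' hle
    simp only [redOf, toZd] at h1 h2
    omega
  · rw [← hV_red, hred]
    exact hht

lemma wfac_eq (r u' : ℕ) (b c : ℕ → ℤ) (j : Fin (r+2)) (d : Fin (r+2) → Fin (2*u'+1))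
    (s : Fin (r+2) → ℕ) (hred : redOf r s = toZd r u' d) (hsj : 1 ≤ s j) :
    wfacN (r+2) b c s j = wfacD r u' b c j d := by
  unfold wfacN wfacD
  have e1 : hV (r+2) (fun i => (subV s j i : ℤ)) = hV (r+2) (predZ r u' j d) := by
    rw [← hV_red, red_subV r u' j d s hred hsj]
  have e2 : hV (r+2) (fun i => (s i : ℤ)) = hV (r+2) (toZd r u' d) := by
    rw [← hV_red, hred]
  rw [e1, e2]

lemma H_rec (r u' m : ℕ) (b c : ℕ → ℤ) (t : ℕ) (d : Fin (r+2) → Fin (2*u'+1)) :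
    H r u' m b c (t+1) d = Phi r u' m b c (H r u' m b c t) d := by
  simp only [Phi]
  by_cases hstat : staticD r u' d
  · by_cases hex : ∃ s : Fin (r+2) → ℕ, (∑ i, s i) = t+1 ∧ redOf r s = toZd r u' d
    · obtain ⟨s, hsum, hred⟩ := hex
      rw [H_spec_pos r u' m b c (t+1) d s hsum hred, G_rec]
      refine Finset.sum_congr rfl fun j _ => ?_
      have hoks : okV (r+2) ((u' : ℕ) : ℤ) s := okV_of_static r u' s d hred hstat
      by_cases hsj : 1 ≤ s j
      · rw [if_pos ⟨hsj, hoks⟩]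
        have hpred : redOf r (subV s j) = predZ r u' j d := red_subV r u' j d s hred hsj
        have hsub_sum : ∑ i, subV s j i = t := by
          have h1 := sum_addV (subV s j) j
          rw [addV_subV s j hsj] at h1
          omega
        by_cases hg : guardD r u' j d
        · rw [if_pos hg,
            H_spec_pos r u' m b c t (predD r u' j d) (subV s j) hsub_sum
              (by rw [hpred, ← toZ_predD r u' j d hg]),
            wfac_eq r u' b c j d s hred hsj]
        · rw [if_neg hg]
          have hG0 : G (r+2) ((u' : ℕ) : ℤ) b c m t (subV s j) = 0 := by
            by_contra hG
            apply hg
            refine ⟨hstat, fun i => ?_⟩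
            have hb2 := red_bound r ((u' : ℕ) : ℤ) (subV s j) (G_ne_zero hG) i
            rw [← hpred]
            exact_mod_cast hb2
          rw [hG0, mul_zero]
      · rw [if_neg (fun hh => hsj hh.1)]
        by_cases hg : guardD r u' j d
        · rw [if_pos hg]
          have hH0 : H r u' m b c t (predD r u' j d) = 0 := by
            have hne : ¬ ∃ s' : Fin (r+2) → ℕ,
                (∑ i, s' i) = t ∧ redOf r s' = toZd r u' (predD r u' j d) := by
              rintro ⟨s', hs1, hs2⟩
              rw [toZ_predD r u' j d hg] at hs2
              have hra := red_addV r u' j d s' hs2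
              have hsum' : ∑ i, addV s' j i = t + 1 := by rw [sum_addV]; omega
              have heq := uniqS r (addV s' j) s (by rw [hsum', hsum]) (by rw [hra, hred])
              apply hsj
              have hje := congrFun heq j
              unfold addV at hje
              simp at hje
              omega
            rw [H, dif_neg hne]
          rw [hH0, mul_zero]
        · rw [if_neg hg]
    · rw [H, dif_neg hex]
      refine (Finset.sum_eq_zero fun j _ => ?_).symm
      by_cases hg : guardD r u' j d
      · rw [if_pos hg]
        have hH0 : H r u' m b c t (predD r u' j d) = 0 := by
          have hne : ¬ ∃ s' : Fin (r+2) → ℕ,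
              (∑ i, s' i) = t ∧ redOf r s' = toZd r u' (predD r u' j d) := by
            rintro ⟨s', hs1, hs2⟩
            rw [toZ_predD r u' j d hg] at hs2
            exact hex ⟨addV s' j, by rw [sum_addV]; omega, red_addV r u' j d s' hs2⟩
          rw [H, dif_neg hne]
        rw [hH0, mul_zero]
      · rw [if_neg hg]
  · have hz : ∀ j : Fin (r+2), j ∈ (Finset.univ : Finset (Fin (r+2))) →
        (if guardD r u' j d
         then ((wfacD r u' b c j d : ℤ) : ZMod m) * H r u' m b c t (predD r u' j d)
         else 0) = 0 :=
      fun j _ => if_neg (fun hg => hstat hg.1)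
    rw [Finset.sum_eq_zero hz, H]
    split
    · rename_i h
      obtain ⟨hsum, hred⟩ := h.choose_spec
      by_contra hG
      exact hstat (staticD_of r u' h.choose d hred (G_ne_zero hG))
    · rfl

lemma SSWCNb_cast (k m : ℕ) (u : ℤ) (b c : ℕ → ℤ) (n : ℕ) :
    ((SSWCNb k u b c n : ℤ) : ZMod m) = G k u b c m (k*n) (fun _ => n) := by
  rw [SSWCNb, G, Int.cast_sum]
  refine Finset.sum_congr rfl fun P _ => ?_
  rw [apply_ite (fun z : ℤ => (z : ZMod m))]
  have hiff : (IsBBP k n P ∧ HeightLE k n P u) ↔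
      (ValidG k (k*n) u P ∧ ∀ j, cntG k (k*n) P j (k*n) = (fun _ => n) j) := by
    constructor
    · rintro ⟨⟨h1, h2⟩, h3⟩; exact ⟨⟨h2, h3⟩, h1⟩
    · rintro ⟨⟨h2, h3⟩, h1⟩; exact ⟨⟨h1, h2⟩, h3⟩
  rw [if_congr hiff rfl rfl, Int.cast_zero]
  rfl

lemma G_to_H (r u' m : ℕ) (b c : ℕ → ℤ) (n : ℕ) :
    G (r+2) ((u' : ℕ) : ℤ) b c m ((r+2)*n) (fun _ => n)
      = H r u' m b c ((r+2)*n) (fun _ => 0) := by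
  refine (H_spec_pos r u' m b c ((r+2)*n) (fun _ => 0) (fun _ => n) ?_ ?_).symm
  · rw [Finset.sum_const, Finset.card_univ, Fintype.card_fin, smul_eq_mul]
  · funext i
    simp [redOf, toZd]

end General


theorem stmt13 (m u k : ℕ) (hm : 0 < m) (hu : 0 < u) (hk : 2 ≤ k) (b c : ℕ → ℤ) :
    ∃ N p : ℕ, 0 < p ∧ ∀ n ≥ N,
      SSWCNb k (u : ℤ) b c (n + p) % (m : ℤ) = SSWCNb k (u : ℤ) b c n % (m : ℤ) := by
  obtain ⟨r, rfl⟩ : ∃ r, k = r + 2 := ⟨k - 2, by omega⟩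
  haveI : NeZero m := ⟨hm.ne'⟩
  set Φ := Phi r u m b c with hΦ
  set x0 : (Fin (r+2) → Fin (2*u+1)) → ZMod m := H r u m b c 0 with hx0
  have hiter : ∀ t, H r u m b c t = Φ^[t] x0 := by
    intro t
    induction t with
    | zero => rw [Function.iterate_zero_apply]
    | succ t ih =>
        funext d
        rw [Function.iterate_succ_apply', ← ih]
        exact H_rec r u m b c t d
  obtain ⟨a0, b0, hne, heq0⟩ := Finite.exists_ne_map_eq_of_infinite (fun t : ℕ => Φ^[t] x0)
  obtain ⟨a, b2, hab, heq⟩ : ∃ a b2, a < b2 ∧ Φ^[a] x0 = Φ^[b2] x0 := by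
    rcases lt_or_gt_of_ne hne with h | h
    · exact ⟨a0, b0, h, heq0⟩
    · exact ⟨b0, a0, h, heq0.symm⟩
  refine ⟨a, b2 - a, by omega, fun n hn => ?_⟩
  have hper : ∀ t, a ≤ t → Φ^[t + (b2 - a)] x0 = Φ^[t] x0 := by
    intro t ht
    have h1 : t + (b2 - a) = (t - a) + b2 := by omega
    have h2 : t = (t - a) + a := by omega
    rw [h1, Function.iterate_add_apply, ← heq, ← Function.iterate_add_apply, ← h2]
  have hmul : ∀ q t, a ≤ t → Φ^[t + q * (b2 - a)] x0 = Φ^[t] x0 := by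
    intro q
    induction q with
    | zero => intro t _; simp
    | succ q ih =>
        intro t ht
        have e : t + (q+1) * (b2 - a) = (t + q * (b2-a)) + (b2 - a) := by ring
        rw [e, hper _ (by omega), ih t ht]
  have key : ((SSWCNb (r+2) ((u:ℕ):ℤ) b c (n + (b2-a)) : ℤ) : ZMod m)
      = ((SSWCNb (r+2) ((u:ℕ):ℤ) b c n : ℤ) : ZMod m) := by
    rw [SSWCNb_cast, SSWCNb_cast, G_to_H, G_to_H, hiter, hiter]
    have e1 : (r+2) * (n + (b2-a)) = ((r+2)*n) + (r+2) * (b2-a) := by ring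
    rw [e1]
    have hle : a ≤ (r+2)*n := le_trans hn (Nat.le_mul_of_pos_left n (by omega))
    exact congrFun (hmul (r+2) ((r+2)*n) hle) _
  exact (ZMod.intCast_eq_intCast_iff' _ _ _).mp key
end

section
/- Let m be a positive integer, k ≥ 2, and b, c integer sequences. Suppose there exists a positive integer u such that m divides each of b_u, b_{u+1}, ..., b_{u+k-1}. Then the sequence of k-dimensional semisymmetric weighted Catalan numbers modulo m (indexed by n ≥ 0) is eventually periodic. -/
open scoped Classical

/-- The `n`th `k`-dimensional semisymmetric weighted Catalan number. -/
noncomputable def SSWCN (k : ℕ) (b c : ℕ → ℤ) (n : ℕ) : ℤ :=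
  ∑ P : Fin (k*n) → Fin k, if IsBBP k n P then sswt k n b c P else 0

/-!
A path whose semisymmetric height exceeds `H = u + k - 2` crosses that level by an up-step
starting at a height in `[u, u + k - 2]`, so its weight contains a factor `b_{u+r}` with `r < k`
and vanishes mod `m`. A path staying at height `≤ H` is described after each step by its gaps
`x_l - x_{l+1}`: the height equals `∑ (l+1)(k-1-l) (x_l - x_{l+1})`, so all gaps are at most `H`,
and the weight of the next step depends only on the current gaps. Hence the weighted counts of
such paths, indexed by their final gap vector, evolve under a fixed transfer operator which,
reduced mod `m`, acts on a finite set. Its iterates are eventually periodic, and `SSWCN n` is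
congruent mod `m` to the count of length `kn` ending at gaps `0`.
-/

open Finset

lemma exists_crossing {f : ℕ → ℤ} {a : ℤ} (h0 : f 0 ≤ a) {i : ℕ} (hi : a < f i) :
    ∃ t < i, f t ≤ a ∧ a < f (t + 1) := by
  induction i with
  | zero => omega
  | succ i ih =>
    by_cases h : f i ≤ a
    · exact ⟨i, lt_add_one i, h, hi⟩
    · obtain ⟨t, ht, hcross⟩ := ih (not_le.1 h)
      exact ⟨t, by omega, hcross⟩

lemma exists_iterate_add_eq_of_finite {Y : Type*} [Finite Y] (ψ : Y → Y) (y : Y) :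
    ∃ N p, 0 < p ∧ ∀ n ≥ N, ψ^[n + p] y = ψ^[n] y := by
  obtain ⟨a, b, hab, h⟩ := Set.finite_univ.exists_lt_map_eq_of_forall_mem
    (f := fun n => ψ^[n] y) fun _ => Set.mem_univ _
  refine ⟨a, b - a, by omega, fun n hn => ?_⟩
  obtain ⟨t, rfl⟩ := Nat.exists_eq_add_of_le hn
  rw [show a + t + (b - a) = t + b by omega, add_comm a t, Function.iterate_add_apply,
    Function.iterate_add_apply]
  exact congrArg _ h.symm

namespace BallotPath

variable {k L s : ℕ}

def count (Q : Fin L → Fin k) (j i : ℕ) : ℕ :=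
  (univ.filter fun t : Fin L => (t : ℕ) < i ∧ (Q t : ℕ) = j).card

def height (Q : Fin L → Fin k) (i : ℕ) : ℤ :=
  ∑ j ∈ range k, ((k : ℤ) - 1 - 2 * j) * count Q j i

lemma count_zero (Q : Fin L → Fin k) (j : ℕ) : count Q j 0 = 0 := by
  simp [count]

lemma count_succ (Q : Fin L → Fin k) (j : ℕ) {i : ℕ} (hi : i < L) :
    count Q j (i + 1) = count Q j i + if (Q ⟨i, hi⟩ : ℕ) = j then 1 else 0 := by
  have split : ∀ t : Fin L, (if (t : ℕ) < i + 1 ∧ (Q t : ℕ) = j then 1 else 0) =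
      (if (t : ℕ) < i ∧ (Q t : ℕ) = j then 1 else 0) +
        if t = ⟨i, hi⟩ then (if (Q t : ℕ) = j then 1 else 0) else 0 := by
    intro t
    simp only [Fin.ext_iff]
    split_ifs <;> omega
  simp only [count, card_filter]
  rw [sum_congr rfl fun t _ => split t, sum_add_distrib, Fintype.sum_ite_eq']

lemma count_snoc_of_le (Q : Fin s → Fin k) (j : Fin k) (j' : ℕ) {i : ℕ} (hi : i ≤ s) :
    count (Fin.snoc Q j : Fin (s + 1) → Fin k) j' i = count Q j' i := by
  induction i with
  | zero => simp only [count_zero]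
  | succ i ih =>
    rw [count_succ _ _ (by omega : i < s + 1), count_succ _ _ hi, ih (by omega)]
    simp [Fin.snoc, show i < s from hi]

lemma count_snoc_last (Q : Fin s → Fin k) (j : Fin k) (j' : ℕ) :
    count (Fin.snoc Q j : Fin (s + 1) → Fin k) j' (s + 1) =
      count Q j' s + if (j : ℕ) = j' then 1 else 0 := by
  rw [count_succ _ _ (Nat.lt_succ_self s), count_snoc_of_le Q j j' le_rfl]
  simp [Fin.snoc]

lemma count_eq_zero_of_le (Q : Fin L → Fin k) {j : ℕ} (hj : k ≤ j) (i : ℕ) : count Q j i = 0 := by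
  simp only [count, card_eq_zero, filter_eq_empty_iff]
  intro t _ h
  exact absurd h.2 (by have := (Q t).isLt; omega)

lemma sum_count (Q : Fin L → Fin k) : ∑ j ∈ range k, count Q j L = L := by
  simp only [count, Fin.is_lt, true_and]
  rw [← card_eq_sum_card_fiberwise (f := fun t => (Q t : ℕ)) (by simp), card_univ, Fintype.card_fin]

lemma height_zero (Q : Fin L → Fin k) : height Q 0 = 0 := by
  simp [height, count_zero]

lemma height_succ (Q : Fin L → Fin k) {i : ℕ} (hi : i < L) :
    height Q (i + 1) = height Q i + ((k : ℤ) - 1 - 2 * (Q ⟨i, hi⟩ : ℕ)) := by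
  simp only [height, count_succ Q _ hi, Nat.cast_add, mul_add, sum_add_distrib, Nat.cast_ite,
    Nat.cast_one, Nat.cast_zero, mul_ite, mul_one, mul_zero]
  rw [sum_ite_eq (range k) _ (fun j => (k : ℤ) - 1 - 2 * j), if_pos (mem_range.2 (Q _).isLt)]

lemma height_snoc_of_le (Q : Fin s → Fin k) (j : Fin k) {i : ℕ} (hi : i ≤ s) :
    height (Fin.snoc Q j : Fin (s + 1) → Fin k) i = height Q i := by
  simp only [height, count_snoc_of_le Q j _ hi]

def gaps (Q : Fin L → Fin k) (i : ℕ) : Fin (k - 1) → ℤ :=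
  fun l => (count Q l i : ℤ) - count Q (l + 1) i

def stepGaps (j : Fin k) : Fin (k - 1) → ℤ :=
  fun l => (if (j : ℕ) = l then 1 else 0) - if (j : ℕ) = l + 1 then 1 else 0

lemma gaps_snoc_of_le (Q : Fin s → Fin k) (j : Fin k) {i : ℕ} (hi : i ≤ s) :
    gaps (Fin.snoc Q j : Fin (s + 1) → Fin k) i = gaps Q i := by
  funext l
  simp only [gaps, count_snoc_of_le Q j _ hi]

lemma gaps_snoc_last (Q : Fin s → Fin k) (j : Fin k) :
    gaps (Fin.snoc Q j : Fin (s + 1) → Fin k) (s + 1) = gaps Q s + stepGaps j := by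
  funext l
  simp only [gaps, count_snoc_last, stepGaps, Pi.add_apply]
  push_cast
  ring

lemma nonneg_gaps_iff (Q : Fin L → Fin k) (i : ℕ) :
    0 ≤ gaps Q i ↔ ∀ j j' : Fin k, j ≤ j' → count Q j' i ≤ count Q j i := by
  constructor
  · intro h j j' hjj
    have : Antitone fun j => count Q j i := antitone_nat_of_succ_le fun l => by
      by_cases hl : l + 1 < k
      · have := h ⟨l, by omega⟩
        simp only [Pi.zero_apply, gaps, sub_nonneg] at this
        exact_mod_cast this
      · rw [count_eq_zero_of_le Q (by omega)]
        exact Nat.zero_le _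
    exact this hjj
  · intro h l
    have := h ⟨l, by omega⟩ ⟨l + 1, by omega⟩ (Fin.mk_le_mk.2 (Nat.le_succ _))
    simp only [Pi.zero_apply, gaps, sub_nonneg]
    exact_mod_cast this

lemma gaps_eq_zero_iff {n : ℕ} (P : Fin (k * n) → Fin k) :
    gaps P (k * n) = 0 ↔ ∀ j : Fin k, count P j (k * n) = n := by
  constructor
  · intro h j
    have hconst : ∀ j < k, count P j (k * n) = count P 0 (k * n) := by
      intro j hj
      induction j with
      | zero => rfl
      | succ j ih =>
        have := congrFun h ⟨j, by omega⟩
        simp only [gaps, Pi.zero_apply, sub_eq_zero] at this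
        rw [← ih (by omega)]
        exact_mod_cast this.symm
    have htotal := sum_count P
    rw [sum_congr rfl fun j hj => hconst j (mem_range.1 hj), sum_const, card_range,
      smul_eq_mul] at htotal
    rw [hconst j j.isLt]
    exact Nat.eq_of_mul_eq_mul_left j.pos htotal
  · intro h
    funext l
    simp [gaps, h ⟨l, by omega⟩, h ⟨l + 1, by omega⟩]

def gapHeight (k : ℕ) (d : Fin (k - 1) → ℤ) : ℤ :=
  ∑ l : Fin (k - 1), ((l : ℤ) + 1) * ((k : ℤ) - 1 - l) * d l

lemma sum_range_succ_mul_eq_sum_mul_sub (x : ℕ → ℤ) (K : ℕ) :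
    ∑ j ∈ range (K + 1), ((K : ℤ) - 2 * j) * x j =
      ∑ l ∈ range K, ((l : ℤ) + 1) * (K - l) * (x l - x (l + 1)) := by
  -- summation by parts: `f (j + 1) - f j = K - 2 j` and `f 0 = f (K + 1) = 0`
  set f : ℕ → ℤ := fun j => j * (K + 1 - j)
  have hl : ∑ j ∈ range (K + 1), ((K : ℤ) - 2 * j) * x j =
      ∑ j ∈ range (K + 1), f (j + 1) * x j - ∑ j ∈ range (K + 1), f j * x j := by
    rw [← sum_sub_distrib]
    refine sum_congr rfl fun j _ => ?_
    simp only [f]; push_cast; ring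
  have hr : ∑ l ∈ range K, ((l : ℤ) + 1) * (K - l) * (x l - x (l + 1)) =
      ∑ l ∈ range K, f (l + 1) * x l - ∑ l ∈ range K, f (l + 1) * x (l + 1) := by
    rw [← sum_sub_distrib]
    refine sum_congr rfl fun l _ => ?_
    simp only [f]; push_cast; ring
  rw [hl, hr, sum_range_succ, sum_range_succ' (fun j => f j * x j)]
  simp [f]

lemma height_eq_gapHeight (Q : Fin L → Fin k) (i : ℕ) : height Q i = gapHeight k (gaps Q i) := by
  cases k with
  | zero => simp [height, gapHeight]
  | succ K =>
    have := sum_range_succ_mul_eq_sum_mul_sub (fun j => (count Q j i : ℤ)) K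
    simp only [height, gapHeight, gaps]
    rw [Fin.sum_univ_eq_sum_range (fun l => ((l : ℤ) + 1) * (((K + 1 : ℕ) : ℤ) - 1 - l) *
      ((count Q l i : ℤ) - count Q (l + 1) i))]
    push_cast at this ⊢
    simpa only [add_sub_cancel_right] using this

lemma le_gapHeight {d : Fin (k - 1) → ℤ} (hd : 0 ≤ d) (l : Fin (k - 1)) : d l ≤ gapHeight k d := by
  have hcoeff : ∀ l : Fin (k - 1), 1 ≤ ((l : ℤ) + 1) * ((k : ℤ) - 1 - l) := fun l =>
    one_le_mul_of_one_le_of_one_le (by omega) (by have := l.isLt; omega)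
  calc d l ≤ ((l : ℤ) + 1) * ((k : ℤ) - 1 - l) * d l := le_mul_of_one_le_left (hd l) (hcoeff l)
    _ ≤ gapHeight k d :=
      single_le_sum (f := fun l : Fin (k - 1) => ((l : ℤ) + 1) * ((k : ℤ) - 1 - l) * d l)
        (fun l _ => mul_nonneg (zero_le_one.trans (hcoeff l)) (hd l)) (mem_univ l)

def Admissible (k : ℕ) (H : ℤ) (d : Fin (k - 1) → ℤ) : Prop :=
  0 ≤ d ∧ gapHeight k d ≤ H

lemma finite_setOf_admissible (k : ℕ) (H : ℤ) : {d | Admissible k H d}.Finite :=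
  (Set.finite_Icc 0 fun _ => H).subset fun _ hd => ⟨hd.1, fun l => (le_gapHeight hd.1 l).trans hd.2⟩

def IsAdmissiblePath (H : ℤ) (Q : Fin L → Fin k) : Prop :=
  ∀ i ≤ L, Admissible k H (gaps Q i)

lemma isAdmissiblePath_snoc_iff (H : ℤ) (Q : Fin s → Fin k) (j : Fin k) :
    IsAdmissiblePath H (Fin.snoc Q j : Fin (s + 1) → Fin k) ↔
      IsAdmissiblePath H Q ∧ Admissible k H (gaps Q s + stepGaps j) := by
  constructor
  · intro h
    refine ⟨fun i hi => ?_, ?_⟩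
    · rw [← gaps_snoc_of_le Q j hi]
      exact h i (by omega)
    · rw [← gaps_snoc_last]
      exact h (s + 1) le_rfl
  · rintro ⟨hQ, hlast⟩ i hi
    rcases Nat.le_succ_iff.1 hi with hi | rfl
    · rw [gaps_snoc_of_le Q j hi]
      exact hQ i hi
    · rwa [gaps_snoc_last]

def weight (b c : ℕ → ℤ) (Q : Fin L → Fin k) : ℤ :=
  ∏ t : Fin L, if (Q t : ℕ) < k / 2 then b (height Q t).toNat else c (height Q (t + 1)).toNat

def stateWeight (b c : ℕ → ℤ) (d : Fin (k - 1) → ℤ) (j : Fin k) : ℤ :=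
  if (j : ℕ) < k / 2 then b (gapHeight k d).toNat else c (gapHeight k (d + stepGaps j)).toNat

lemma weight_snoc (b c : ℕ → ℤ) (Q : Fin s → Fin k) (j : Fin k) :
    weight b c (Fin.snoc Q j : Fin (s + 1) → Fin k) =
      weight b c Q * stateWeight b c (gaps Q s) j := by
  rw [weight, Fin.prod_univ_castSucc]
  congr 1
  · refine prod_congr rfl fun t _ => ?_
    simp only [Fin.snoc_castSucc, Fin.val_castSucc, height_snoc_of_le Q j t.isLt.le,
      height_snoc_of_le Q j t.isLt]
  · simp only [Fin.snoc_last, Fin.val_last, stateWeight, height_snoc_of_le Q j le_rfl,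
      height_eq_gapHeight, gaps_snoc_last]

noncomputable def pathSum (k : ℕ) (H : ℤ) (b c : ℕ → ℤ) (s : ℕ) (d : Fin (k - 1) → ℤ) : ℤ :=
  ∑ Q : Fin s → Fin k, if IsAdmissiblePath H Q ∧ gaps Q s = d then weight b c Q else 0

noncomputable def transfer (k : ℕ) (H : ℤ) (b c : ℕ → ℤ) (f : (Fin (k - 1) → ℤ) → ℤ)
    (d : Fin (k - 1) → ℤ) : ℤ :=
  ∑ j : Fin k, if Admissible k H d ∧ Admissible k H (d - stepGaps j) then
    f (d - stepGaps j) * stateWeight b c (d - stepGaps j) j else 0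

lemma pathSum_succ (k : ℕ) (H : ℤ) (b c : ℕ → ℤ) (s : ℕ) :
    pathSum k H b c (s + 1) = transfer k H b c (pathSum k H b c s) := by
  funext d
  have hsnoc : ∀ (Q : Fin s → Fin k) (j : Fin k),
      (if IsAdmissiblePath H (Fin.snoc Q j : Fin (s + 1) → Fin k) ∧
          gaps (Fin.snoc Q j : Fin (s + 1) → Fin k) (s + 1) = d
        then weight b c (Fin.snoc Q j : Fin (s + 1) → Fin k) else 0) =
      if Admissible k H d ∧ Admissible k H (d - stepGaps j) then
        (if IsAdmissiblePath H Q ∧ gaps Q s = d - stepGaps j then weight b c Q else 0) *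
          stateWeight b c (d - stepGaps j) j
      else 0 := by
    intro Q j
    rw [isAdmissiblePath_snoc_iff, gaps_snoc_last, weight_snoc]
    by_cases hg : gaps Q s = d - stepGaps j
    · by_cases hQ : IsAdmissiblePath H Q
      · simp [hg, hQ, hg ▸ hQ s le_rfl]
      · simp [hQ]
    · have : gaps Q s + stepGaps j ≠ d := fun h => hg (eq_sub_of_add_eq h)
      simp [hg, this]
  rw [pathSum, ← (Fin.snocEquiv fun _ => Fin k).sum_comp, Fintype.sum_prod_type, transfer]
  refine sum_congr rfl fun j _ => (sum_congr rfl fun Q _ => hsnoc Q j).trans ?_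
  rw [sum_ite_irrel, sum_const_zero, ← sum_mul, pathSum]

lemma pathSum_eq_iterate (k : ℕ) (H : ℤ) (b c : ℕ → ℤ) (s : ℕ) :
    pathSum k H b c s = (transfer k H b c)^[s] (pathSum k H b c 0) := by
  induction s with
  | zero => rfl
  | succ s ih => rw [Function.iterate_succ_apply', ← ih, pathSum_succ]

noncomputable def transferMod (k : ℕ) (H : ℤ) (b c : ℕ → ℤ) (m : ℕ)
    (g : {d // Admissible k H d} → ZMod m) (d : {d // Admissible k H d}) : ZMod m :=
  ∑ j : Fin k, if h : Admissible k H (d.1 - stepGaps j) then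
    g ⟨_, h⟩ * stateWeight b c (d.1 - stepGaps j) j else 0

lemma semiconj_transfer_transferMod (k : ℕ) (H : ℤ) (b c : ℕ → ℤ) (m : ℕ) :
    Function.Semiconj (fun f (d : {d // Admissible k H d}) => (f d : ZMod m))
      (transfer k H b c) (transferMod k H b c m) := by
  intro f
  funext d
  simp only [transfer, transferMod, d.2, true_and]
  push_cast
  refine sum_congr rfl fun j _ => ?_
  split_ifs <;> rfl

lemma dvd_weight_of_lt_height (hk : 2 ≤ k) {m u : ℕ} {b : ℕ → ℤ} (c : ℕ → ℤ)
    (hb : ∀ j < k, (m : ℤ) ∣ b (u + j)) (Q : Fin L → Fin k) {i : ℕ} (hi : i ≤ L)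
    (hgt : (u : ℤ) + k - 2 < height Q i) : (m : ℤ) ∣ weight b c Q := by
  obtain ⟨t, hti, hle, hlt⟩ := exists_crossing (f := height Q) (by rw [height_zero]; omega) hgt
  have ht : t < L := by omega
  rw [height_succ Q ht] at hlt
  have hup : (Q ⟨t, ht⟩ : ℕ) < k / 2 := by omega
  obtain ⟨r, hr⟩ : ∃ r : ℕ, height Q t = u + r := ⟨(height Q t - u).toNat, by omega⟩
  have hfactor : (m : ℤ) ∣ if (Q ⟨t, ht⟩ : ℕ) < k / 2 then b (height Q t).toNat
      else c (height Q (t + 1)).toNat := by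
    rw [if_pos hup, hr, show ((u : ℤ) + r).toNat = u + r by omega]
    exact hb r (by omega)
  exact hfactor.trans (dvd_prod_of_mem _ (mem_univ _))

lemma cnt_eq_count {n : ℕ} (P : Fin (k * n) → Fin k) (j : Fin k) (i : ℕ) :
    cnt k n P j i = count P j i := by
  simp only [cnt, count, Fin.val_inj]

lemma ptHt_eq_height {n : ℕ} (P : Fin (k * n) → Fin k) (i : ℕ) : ptHt k n P i = height P i := by
  rw [ptHt, height, ← Fin.sum_univ_eq_sum_range (fun j => ((k : ℤ) - 1 - 2 * j) * count P j i)]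
  simp only [cnt_eq_count]

lemma sswt_eq_weight {n : ℕ} (b c : ℕ → ℤ) (P : Fin (k * n) → Fin k) :
    sswt k n b c P = weight b c P := by
  simp only [sswt, weight, ptHt_eq_height]

lemma isAdmissiblePath_and_gaps_eq_zero_iff {n : ℕ} (H : ℤ) (P : Fin (k * n) → Fin k) :
    IsAdmissiblePath H P ∧ gaps P (k * n) = 0 ↔ IsBBP k n P ∧ HeightLE k n P H := by
  simp only [IsAdmissiblePath, Admissible, IsBBP, HeightLE, cnt_eq_count, ptHt_eq_height,
    gaps_eq_zero_iff, nonneg_gaps_iff, ← height_eq_gapHeight, forall_and]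
  tauto

lemma sswcn_modEq_pathSum (hk : 2 ≤ k) {m u : ℕ} {b : ℕ → ℤ} (c : ℕ → ℤ)
    (hb : ∀ j < k, (m : ℤ) ∣ b (u + j)) (n : ℕ) :
    SSWCN k b c n ≡ pathSum k (u + k - 2) b c (k * n) 0 [ZMOD m] := by
  rw [SSWCN, pathSum, Int.modEq_iff_dvd, ← sum_sub_distrib]
  refine dvd_sum fun P _ => ?_
  simp only [isAdmissiblePath_and_gaps_eq_zero_iff, sswt_eq_weight]
  by_cases hP : IsBBP k n P
  · by_cases hH : HeightLE k n P (u + k - 2)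
    · simp [hP, hH]
    · rw [if_neg fun h => hH h.2, if_pos hP, zero_sub, dvd_neg]
      simp only [HeightLE, not_forall, not_le, ptHt_eq_height] at hH
      obtain ⟨i, hi, hgt⟩ := hH
      exact dvd_weight_of_lt_height hk c hb P hi hgt
  · simp [hP]

end BallotPath

open BallotPath

theorem stmt14 (m k : ℕ) (hm : 0 < m) (hk : 2 ≤ k) (b c : ℕ → ℤ)
    (hdiv : ∃ u : ℕ, 0 < u ∧ ∀ j < k, (m : ℤ) ∣ b (u + j)) :
    ∃ N p : ℕ, 0 < p ∧ ∀ n ≥ N,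
      SSWCN k b c (n + p) % (m : ℤ) = SSWCN k b c n % (m : ℤ) := by
  obtain ⟨u, -, hb⟩ := hdiv
  have : NeZero m := ⟨hm.ne'⟩
  set H : ℤ := u + k - 2
  have h0 : Admissible k H 0 := ⟨le_rfl, by simp [gapHeight, H]; omega⟩
  have : Finite {d // Admissible k H d} := (finite_setOf_admissible k H).to_subtype
  set reduce := fun (f : (Fin (k - 1) → ℤ) → ℤ) (d : {d // Admissible k H d}) => (f d : ZMod m)
  have hreduce : ∀ n, (pathSum k H b c (k * n) 0 : ZMod m) =
      ((transferMod k H b c m)^[k])^[n] (reduce (pathSum k H b c 0)) ⟨0, h0⟩ := fun n => by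
    rw [← Function.iterate_mul, ← (semiconj_transfer_transferMod k H b c m).iterate_right,
      ← pathSum_eq_iterate]
  obtain ⟨N, p, hp, hper⟩ :=
    exists_iterate_add_eq_of_finite (transferMod k H b c m)^[k] (reduce (pathSum k H b c 0))
  refine ⟨N, p, hp, fun n hn => ?_⟩
  have hpath : pathSum k H b c (k * (n + p)) 0 ≡ pathSum k H b c (k * n) 0 [ZMOD m] :=
    (ZMod.intCast_eq_intCast_iff _ _ m).1 (by rw [hreduce, hreduce, hper n hn])
  exact ((sswcn_modEq_pathSum hk c hb _).trans hpath).trans (sswcn_modEq_pathSum hk c hb n).symm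
end
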